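/- arXiv:2403.04131 — 3 statements merged into one kernel-verified Lean document; each statement's English description precedes it below -/
import Mathlib

section
/- Let ((γ_k, δ_k, β_k))_{k≥1} be an i.i.d. sequence of triples of real random variables such that γ_1 and δ_1 are square-integrable, Var(γ_1) > 0, Cov(γ_1, δ_1) = 0, β_1 is integrable and independent of γ_1, and β_1·γ_1 and β_1·γ_1² are integrable. Define τ_k = δ_k + β_k·γ_k for each k. Then the OLS slope estimator β̂_K = (Σ_{k=1}^K (γ_k − γ̄_K)·τ_k) / (Σ_{k=1}^K (γ_k − γ̄_K)²), where γ̄_K = K^{-1} Σ_{k=1}^K γ_k, converges in probability to E[β_1] as K → ∞. -/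
open MeasureTheory ProbabilityTheory Filter Topology

/-- The OLS slope estimator based on data `(x k ω, y k ω)`, `k = 0, …, K-1`. -/
noncomputable def olsSlope {Ω : Type*} (K : ℕ) (x y : ℕ → Ω → ℝ) (ω : Ω) : ℝ :=
  (∑ k ∈ Finset.range K, (x k ω - (∑ j ∈ Finset.range K, x j ω) / K) * y k ω) /
  (∑ k ∈ Finset.range K, (x k ω - (∑ j ∈ Finset.range K, x j ω) / K) ^ 2)

lemma olsSlope_eq_avg {Ω : Type*} (K : ℕ) (hK : 1 ≤ K) (x y : ℕ → Ω → ℝ) (ω : Ω) :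
    olsSlope K x y ω =
      ((∑ k ∈ Finset.range K, x k ω * y k ω) / K -
        ((∑ j ∈ Finset.range K, x j ω) / K) * ((∑ j ∈ Finset.range K, y j ω) / K)) /
      ((∑ k ∈ Finset.range K, x k ω ^ 2) / K - ((∑ j ∈ Finset.range K, x j ω) / K) ^ 2) := by
  have hK0 : (K : ℝ) ≠ 0 := Nat.cast_ne_zero.mpr (by omega)
  set S := ∑ j ∈ Finset.range K, x j ω with hS
  set T := ∑ j ∈ Finset.range K, y j ω with hT
  set P := ∑ k ∈ Finset.range K, x k ω * y k ω with hP
  set Q := ∑ k ∈ Finset.range K, x k ω ^ 2 with hQ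
  have hN : ∑ k ∈ Finset.range K, (x k ω - S / K) * y k ω = P - (S / K) * T := by
    simp only [sub_mul, Finset.sum_sub_distrib, ← Finset.mul_sum, hP, hT]
  have hD : ∑ k ∈ Finset.range K, (x k ω - S / K) ^ 2 = Q - S ^ 2 / K := by
    have h1 : ∀ k, (x k ω - S / K) ^ 2
        = x k ω ^ 2 - 2 * (S / K) * x k ω + (S / K) ^ 2 := fun k => by ring
    rw [Finset.sum_congr rfl fun k _ => h1 k]
    rw [Finset.sum_add_distrib, Finset.sum_sub_distrib, ← Finset.mul_sum, Finset.sum_const,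
      Finset.card_range, ← hQ, ← hS]
    rw [nsmul_eq_mul]
    field_simp
    ring
  rw [olsSlope, ← hS, hN, hD]
  have h1 : P / K - (S / K) * (T / K) = (P - (S / K) * T) / K := by ring
  have h2 : Q / K - (S / K) ^ 2 = (Q - S ^ 2 / K) / K := by
    field_simp
  rw [h1, h2, div_div_div_comm, div_self hK0, div_one]

/-- If `((γ_k, δ_k, β_k))` is an i.i.d. sequence of real random variables with `γ_0, δ_0`
square-integrable, `Var(γ_0) > 0`, `Cov(γ_0, δ_0) = 0`, `β_0` integrable and independent of
`γ_0`, and `β_0·γ_0`, `β_0·γ_0²` integrable, then with `τ_k = δ_k + β_k·γ_k` the OLS slope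
estimator of `τ` on `γ` converges in probability to `E[β_0]`. -/
theorem ols_slope_tendsto_mean_beta
    {Ω : Type*} [MeasureSpace Ω] [IsProbabilityMeasure (ℙ : Measure Ω)]
    (γ δ b : ℕ → Ω → ℝ)
    (hmγ : ∀ k, Measurable (γ k)) (hmδ : ∀ k, Measurable (δ k)) (hmb : ∀ k, Measurable (b k))
    (hindep : iIndepFun (fun k ω => (γ k ω, δ k ω, b k ω)) ℙ)
    (hident : ∀ k, IdentDistrib (fun ω => (γ k ω, δ k ω, b k ω))
      (fun ω => (γ 0 ω, δ 0 ω, b 0 ω)) ℙ ℙ)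
    (hγ2 : MemLp (γ 0) 2 ℙ) (hδ2 : MemLp (δ 0) 2 ℙ)
    (hvar : 0 < variance (γ 0) ℙ)
    (hcov : ∫ ω, (γ 0 ω - ∫ ω', γ 0 ω' ∂ℙ) * (δ 0 ω - ∫ ω', δ 0 ω' ∂ℙ) ∂ℙ = 0)
    (hbint : Integrable (b 0) ℙ)
    (hbγindep : IndepFun (b 0) (γ 0) ℙ)
    (hbγint : Integrable (fun ω => b 0 ω * γ 0 ω) ℙ)
    (hbγ2int : Integrable (fun ω => b 0 ω * (γ 0 ω) ^ 2) ℙ) :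
    TendstoInMeasure ℙ
      (fun K => olsSlope K γ (fun k ω => δ k ω + b k ω * γ k ω))
      atTop (fun _ => ∫ ω, b 0 ω ∂ℙ) := by
  set τ : ℕ → Ω → ℝ := fun k ω => δ k ω + b k ω * γ k ω with hτdef
  -- basic integrabilities
  have hγint : Integrable (γ 0) ℙ := hγ2.integrable one_le_two
  have hδint : Integrable (δ 0) ℙ := hδ2.integrable one_le_two
  have hγsqint : Integrable (fun ω => γ 0 ω ^ 2) ℙ := hγ2.integrable_sq
  have hγδint : Integrable (fun ω => γ 0 ω * δ 0 ω) ℙ := by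
    have h := hδ2.smul (φ := γ 0) hγ2 (p := 2) (q := 2) (r := 1)
    have := h.integrable le_rfl
    exact this
  have hτint : Integrable (τ 0) ℙ := hδint.add hbγint
  have hγτint : Integrable (fun ω => γ 0 ω * τ 0 ω) ℙ := by
    have : (fun ω => γ 0 ω * τ 0 ω)
        = fun ω => γ 0 ω * δ 0 ω + b 0 ω * γ 0 ω ^ 2 := by
      funext ω; simp only [hτdef]; ring
    rw [this]
    exact hγδint.add hbγ2int
  -- strong law helper
  have slln : ∀ f : ℝ × ℝ × ℝ → ℝ, Measurable f →
      Integrable (fun ω => f (γ 0 ω, δ 0 ω, b 0 ω)) ℙ →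
      ∀ᵐ ω ∂ℙ, Tendsto (fun K : ℕ => (∑ k ∈ Finset.range K, f (γ k ω, δ k ω, b k ω)) / K)
        atTop (𝓝 (∫ ω, f (γ 0 ω, δ 0 ω, b 0 ω) ∂ℙ)) := by
    intro f hf hint
    exact strong_law_ae_real (fun k ω => f (γ k ω, δ k ω, b k ω)) hint
      (fun i j hij => (hindep.indepFun hij).comp hf hf)
      (fun i => (hident i).comp hf)
  have h1 := slln (fun p => p.1) measurable_fst hγint
  have h2 := slln (fun p => p.1 ^ 2) (measurable_fst.pow_const 2) hγsqint
  have h3 := slln (fun p => p.2.1 + p.2.2 * p.1)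
    ((measurable_snd.fst).add ((measurable_snd.snd).mul measurable_fst)) hτint
  have h4 := slln (fun p => p.1 * (p.2.1 + p.2.2 * p.1))
    (measurable_fst.mul ((measurable_snd.fst).add ((measurable_snd.snd).mul measurable_fst)))
    hγτint
  -- names for the moments
  set a := ∫ ω, γ 0 ω ∂ℙ with ha
  set c := ∫ ω, δ 0 ω ∂ℙ with hc
  set Eb := ∫ ω, b 0 ω ∂ℙ with hEb
  set m2 := ∫ ω, γ 0 ω ^ 2 ∂ℙ with hm2
  have hvne : m2 - a ^ 2 ≠ 0 := by
    have := variance_eq_sub hγ2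
    have hv : variance (γ 0) ℙ = m2 - a ^ 2 := by
      rw [this]; congr 1
    rw [hv] at hvar
    exact ne_of_gt hvar
  -- covariance: ∫ γδ = a * c
  have hγδ : ∫ ω, γ 0 ω * δ 0 ω ∂ℙ = a * c := by
    have hexp : ∀ ω, (γ 0 ω - a) * (δ 0 ω - c)
        = γ 0 ω * δ 0 ω - c * γ 0 ω - a * δ 0 ω + a * c := fun ω => by ring
    have i1 : Integrable (fun ω => c * γ 0 ω) ℙ := hγint.const_mul c
    have i2 : Integrable (fun ω => a * δ 0 ω) ℙ := hδint.const_mul a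
    have i3 : Integrable (fun ω => γ 0 ω * δ 0 ω - c * γ 0 ω) ℙ := hγδint.sub i1
    have i4 : Integrable (fun ω => γ 0 ω * δ 0 ω - c * γ 0 ω - a * δ 0 ω) ℙ := i3.sub i2
    have : ∫ ω, (γ 0 ω - a) * (δ 0 ω - c) ∂ℙ
        = (∫ ω, γ 0 ω * δ 0 ω ∂ℙ) - c * a - a * c + a * c := by
      simp_rw [hexp]
      rw [integral_add i4 (integrable_const _), integral_sub i3 i2, integral_sub hγδint i1,
        integral_const_mul, integral_const_mul, integral_const]
      simp [← ha, ← hc]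
    rw [hcov] at this
    linarith
  -- independence: ∫ bγ = Eb * a, ∫ bγ² = Eb * m2
  have hbγ : ∫ ω, b 0 ω * γ 0 ω ∂ℙ = Eb * a :=
    hbγindep.integral_fun_mul_eq_mul_integral (hmb 0).aestronglyMeasurable (hmγ 0).aestronglyMeasurable
  have hbγ2 : ∫ ω, b 0 ω * γ 0 ω ^ 2 ∂ℙ = Eb * m2 := by
    have hind2 : IndepFun (b 0) (fun ω => γ 0 ω ^ 2) ℙ :=
      hbγindep.comp measurable_id (measurable_id.pow_const 2)
    exact hind2.integral_fun_mul_eq_mul_integral (hmb 0).aestronglyMeasurable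
      ((hmγ 0).pow_const 2).aestronglyMeasurable
  -- integrals of τ and γτ
  have hτmean : ∫ ω, τ 0 ω ∂ℙ = c + Eb * a := by
    simp only [hτdef]
    rw [integral_add hδint hbγint, hbγ, ← hc]
  have hγτmean : ∫ ω, γ 0 ω * τ 0 ω ∂ℙ = a * c + Eb * m2 := by
    have heq : (fun ω => γ 0 ω * τ 0 ω)
        = fun ω => γ 0 ω * δ 0 ω + b 0 ω * γ 0 ω ^ 2 := by
      funext ω; simp only [hτdef]; ring
    rw [heq, integral_add hγδint hbγ2int, hγδ, hbγ2]
  -- a.e. convergence of the OLS slope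
  have key : ∀ᵐ ω ∂ℙ, Tendsto (fun K => olsSlope K γ τ ω) atTop (𝓝 Eb) := by
    filter_upwards [h1, h2, h3, h4] with ω t1 t2 t3 t4
    have t3' : Tendsto (fun K : ℕ => (∑ k ∈ Finset.range K, τ k ω) / K) atTop
        (𝓝 (c + Eb * a)) := by
      rw [← hτmean]; exact t3
    have t4' : Tendsto (fun K : ℕ => (∑ k ∈ Finset.range K, γ k ω * τ k ω) / K) atTop
        (𝓝 (a * c + Eb * m2)) := by
      rw [← hγτmean]; exact t4
    have hnum : Tendsto (fun K : ℕ =>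
        (∑ k ∈ Finset.range K, γ k ω * τ k ω) / K -
        ((∑ j ∈ Finset.range K, γ j ω) / K) * ((∑ j ∈ Finset.range K, τ j ω) / K)) atTop
        (𝓝 ((a * c + Eb * m2) - a * (c + Eb * a))) := t4'.sub (t1.mul t3')
    have hden : Tendsto (fun K : ℕ =>
        (∑ k ∈ Finset.range K, γ k ω ^ 2) / K - ((∑ j ∈ Finset.range K, γ j ω) / K) ^ 2) atTop
        (𝓝 (m2 - a ^ 2)) := by
      have h := t2.sub (t1.mul t1)
      have e1 : (fun K : ℕ =>
          (∑ k ∈ Finset.range K, γ k ω ^ 2) / K - ((∑ j ∈ Finset.range K, γ j ω) / K) ^ 2)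
          = fun K : ℕ => (∑ k ∈ Finset.range K, γ k ω ^ 2) / K -
            ((∑ j ∈ Finset.range K, γ j ω) / K) * ((∑ j ∈ Finset.range K, γ j ω) / K) := by
        funext K; ring
      have e2 : m2 - a ^ 2 = m2 - a * a := by ring
      rw [e1, e2]; exact h
    have hdiv := hnum.div hden hvne
    have hval : ((a * c + Eb * m2) - a * (c + Eb * a)) / (m2 - a ^ 2) = Eb := by
      have hnv : (a * c + Eb * m2) - a * (c + Eb * a) = Eb * (m2 - a ^ 2) := by ring
      rw [hnv, mul_div_assoc, div_self hvne, mul_one]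
    rw [hval] at hdiv
    refine hdiv.congr' ?_
    filter_upwards [eventually_ge_atTop 1] with K hK
    exact (olsSlope_eq_avg K hK γ τ ω).symm
  -- measurability of the OLS slope
  have hτm : ∀ k, Measurable (τ k) := fun k => (hmδ k).add ((hmb k).mul (hmγ k))
  have hols : ∀ K, AEStronglyMeasurable (fun ω => olsSlope K γ τ ω) ℙ := by
    intro K
    have hS : Measurable fun ω => ∑ j ∈ Finset.range K, γ j ω :=
      Finset.measurable_sum _ fun j _ => hmγ j
    exact ((Finset.measurable_sum _ fun k _ =>
        ((hmγ k).sub (hS.div_const _)).mul (hτm k)).div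
      (Finset.measurable_sum _ fun k _ =>
        ((hmγ k).sub (hS.div_const _)).pow_const 2)).aestronglyMeasurable
  exact tendstoInMeasure_of_tendsto_ae hols key
end

section
/- Let ((γ_k, δ_k))_{k≥1} be an i.i.d. sequence of square-integrable real random variables with σ²_γ := Var(γ_1) > 0 and Cov(γ_1, δ_1) = 0, let β ∈ ℝ, and set τ_k = δ_k + β·γ_k. Let ((u_k, v_k))_{k≥1} be pairs of jointly Gaussian mean-zero random variables, independent across k and independent of ((γ_k, δ_k))_{k≥1}, with Var(u_k) = σ²_{uk} > 0, Var(v_k) < ∞, and Cov(u_k, v_k) = σ_{uv,k} (possibly nonzero). Define γ̂_k = γ_k + u_k and τ̂_k = τ_k + v_k, and the bias-corrected estimator β̂_BCES(K) = (Σ_{k=1}^K (γ̂_k − γ̄̂_K)·τ̂_k − Σ_{k=1}^K σ_{uv,k}) / (Σ_{k=1}^K (γ̂_k − γ̄̂_K)² − Σ_{k=1}^K σ²_{uk}), with γ̄̂_K = K^{-1} Σ_{k=1}^K γ̂_k. Assume Σ_{k=1}^∞ Var(γ̂_k²)/k² < ∞, sup_k σ²_{uk} < ∞, sup_k Var(v_k)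 < ∞, and that K^{-1} Σ_{k=1}^K σ²_{uk} and K^{-1} Σ_{k=1}^K σ_{uv,k} converge to finite limits. Then β̂_BCES(K) converges in probability to β as K → ∞. -/
open MeasureTheory ProbabilityTheory Filter Topology
open scoped NNReal

set_option linter.unusedSectionVars false
section TIM
variable {Ω : Type*} [MeasureSpace Ω] [IsProbabilityMeasure (ℙ : Measure Ω)]

lemma tim_det (c : ℕ → ℝ) (l : ℝ) (h : Tendsto c atTop (𝓝 l)) :
    TendstoInMeasure (ℙ : Measure Ω) (fun n (_ : Ω) => c n) atTop (fun _ => l) := by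
  rw [tendstoInMeasure_iff_dist]
  intro ε hε
  have h' : ∀ᶠ n in atTop, dist (c n) l < ε := by
    have := Metric.tendsto_atTop.1 h ε hε
    simpa [dist_comm] using this
  have h0 : ∀ᶠ n in atTop,
      (ℙ : Measure Ω) {ω | ε ≤ dist (c n) l} = 0 := by
    filter_upwards [h'] with n hn
    have : {ω : Ω | ε ≤ dist (c n) l} = ∅ := by
      ext ω; simp [not_le.2 hn]
    simp [this]
  exact tendsto_const_nhds.congr' (by filter_upwards [h0] with n hn; simp [hn])

lemma tim_comp₂ {f g : ℕ → Ω → ℝ} {a b : ℝ} {φ : ℝ → ℝ → ℝ}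
    (hφ : ContinuousAt (fun p : ℝ × ℝ => φ p.1 p.2) (a, b))
    (hf : TendstoInMeasure (ℙ : Measure Ω) f atTop (fun _ => a))
    (hg : TendstoInMeasure (ℙ : Measure Ω) g atTop (fun _ => b)) :
    TendstoInMeasure (ℙ : Measure Ω) (fun n ω => φ (f n ω) (g n ω)) atTop (fun _ => φ a b) := by
  rw [tendstoInMeasure_iff_dist] at hf hg ⊢
  intro ε hε
  obtain ⟨δ, hδ, hd⟩ := Metric.continuousAt_iff.1 hφ ε hε
  have key : ∀ n, (ℙ : Measure Ω) {ω | ε ≤ dist (φ (f n ω) (g n ω)) (φ a b)} ≤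
      (ℙ : Measure Ω) {ω | δ/2 ≤ dist (f n ω) a} +
      (ℙ : Measure Ω) {ω | δ/2 ≤ dist (g n ω) b} := by
    intro n
    refine le_trans (measure_mono ?_) (measure_union_le _ _)
    intro ω hω
    simp only [Set.mem_setOf_eq, Set.mem_union]
    by_contra hcon
    push_neg at hcon
    have h1 : dist (f n ω) a < δ/2 := not_le.1 (fun h => (not_le.2 hcon.1) h)
    have h2 : dist (g n ω) b < δ/2 := not_le.1 (fun h => (not_le.2 hcon.2) h)
    have hdist : dist ((f n ω, g n ω) : ℝ × ℝ) (a, b) < δ := by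
      rw [Prod.dist_eq]
      exact max_lt (by linarith) (by linarith)
    have h3 := hd hdist
    simp only [Set.mem_setOf_eq] at hω
    exact absurd hω (not_le.2 h3)
  have hsum : Tendsto (fun n => (ℙ : Measure Ω) {ω | δ/2 ≤ dist (f n ω) a} +
      (ℙ : Measure Ω) {ω | δ/2 ≤ dist (g n ω) b}) atTop (𝓝 0) := by
    have := (hf (δ/2) (by linarith)).add (hg (δ/2) (by linarith))
    simpa using this
  exact tendsto_of_tendsto_of_tendsto_of_le_of_le tendsto_const_nhds hsum
    (fun n => zero_le) key

lemma tim_congr {f g : ℕ → Ω → ℝ} {L : Ω → ℝ}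
    (h : ∀ᶠ n in atTop, ∀ ω, f n ω = g n ω)
    (hf : TendstoInMeasure (ℙ : Measure Ω) f atTop L) :
    TendstoInMeasure (ℙ : Measure Ω) g atTop L := by
  intro ε hε
  refine (hf ε hε).congr' ?_
  filter_upwards [h] with n hn
  congr 1
  ext ω
  simp [hn ω]

lemma tim_add {f g : ℕ → Ω → ℝ} {a b : ℝ}
    (hf : TendstoInMeasure (ℙ : Measure Ω) f atTop (fun _ => a))
    (hg : TendstoInMeasure (ℙ : Measure Ω) g atTop (fun _ => b)) :
    TendstoInMeasure (ℙ : Measure Ω) (fun n ω => f n ω + g n ω) atTop (fun _ => a + b) :=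
  tim_comp₂ (by fun_prop) hf hg

lemma tim_sub {f g : ℕ → Ω → ℝ} {a b : ℝ}
    (hf : TendstoInMeasure (ℙ : Measure Ω) f atTop (fun _ => a))
    (hg : TendstoInMeasure (ℙ : Measure Ω) g atTop (fun _ => b)) :
    TendstoInMeasure (ℙ : Measure Ω) (fun n ω => f n ω - g n ω) atTop (fun _ => a - b) :=
  tim_comp₂ (by fun_prop) hf hg

lemma tim_mul {f g : ℕ → Ω → ℝ} {a b : ℝ}
    (hf : TendstoInMeasure (ℙ : Measure Ω) f atTop (fun _ => a))
    (hg : TendstoInMeasure (ℙ : Measure Ω) g atTop (fun _ => b)) :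
    TendstoInMeasure (ℙ : Measure Ω) (fun n ω => f n ω * g n ω) atTop (fun _ => a * b) :=
  tim_comp₂ (by fun_prop) hf hg

lemma tim_div {f g : ℕ → Ω → ℝ} {a b : ℝ} (hb : b ≠ 0)
    (hf : TendstoInMeasure (ℙ : Measure Ω) f atTop (fun _ => a))
    (hg : TendstoInMeasure (ℙ : Measure Ω) g atTop (fun _ => b)) :
    TendstoInMeasure (ℙ : Measure Ω) (fun n ω => f n ω / g n ω) atTop (fun _ => a / b) :=
  tim_comp₂ (ContinuousAt.div continuousAt_fst continuousAt_snd hb) hf hg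

end TIM
section LLN
variable {Ω : Type*} [MeasureSpace Ω] [IsProbabilityMeasure (ℙ : Measure Ω)]

lemma wlln {Z : ℕ → Ω → ℝ} (h2 : ∀ k, MemLp (Z k) 2 ℙ)
    (hpair : ∀ i j, i ≠ j → IndepFun (Z i) (Z j) ℙ)
    {C : ℝ} (hC : ∀ k, variance (Z k) ℙ ≤ C)
    (m : ℕ → ℝ) (hmean : ∀ k, ∫ ω, Z k ω ∂ℙ = m k)
    {l : ℝ} (hml : Tendsto (fun K : ℕ => (∑ k ∈ Finset.range K, m k) / (K : ℝ)) atTop (𝓝 l)) :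
    TendstoInMeasure (ℙ : Measure Ω) (fun K ω => (∑ k ∈ Finset.range K, Z k ω) / (K : ℝ))
      atTop (fun _ => l) := by
  rw [tendstoInMeasure_iff_dist]
  intro ε hε
  set S : ℕ → Ω → ℝ := fun K ω => ∑ k ∈ Finset.range K, Z k ω with hSdef
  have hS2 : ∀ K, MemLp (S K) 2 ℙ := by
    intro K
    have := memLp_finset_sum' (μ := (ℙ : Measure Ω)) (Finset.range K) (fun i (_ : i ∈ Finset.range K) => h2 i)
    convert this using 1
    ext ω
    simp [hSdef]
  have hvS : ∀ K : ℕ, variance (S K) ℙ ≤ K * C := by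
    intro K
    have heq : S K = ∑ k ∈ Finset.range K, Z k := by
      ext ω; simp [hSdef]
    rw [heq, IndepFun.variance_sum (fun i _ => h2 i)
      (fun i _ j _ hij => hpair i j hij)]
    calc ∑ k ∈ Finset.range K, variance (Z k) ℙ ≤ ∑ _k ∈ Finset.range K, C :=
          Finset.sum_le_sum fun i _ => hC i
      _ = K * C := by simp [mul_comm]
  have hmS : ∀ K, ∫ ω, S K ω ∂ℙ = ∑ k ∈ Finset.range K, m k := by
    intro K
    rw [integral_finset_sum _ fun i _ => (h2 i).integrable one_le_two]
    exact Finset.sum_congr rfl fun i _ => hmean i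
  have hC0 : 0 ≤ C := le_trans (variance_nonneg _ _) (hC 0)
  have hev : ∀ᶠ K : ℕ in atTop, (ℙ : Measure Ω) {ω | ε ≤ dist (S K ω / K) l} ≤
      ENNReal.ofReal (C / ((ε/2)^2 * K)) := by
    have h1 : ∀ᶠ K : ℕ in atTop, |(∑ k ∈ Finset.range K, m k)/(K:ℝ) - l| < ε/2 := by
      have := Metric.tendsto_nhds.mp hml (ε/2) (by linarith)
      filter_upwards [this] with K hK
      simpa [Real.dist_eq] using hK
    filter_upwards [h1, eventually_ge_atTop 1] with K hK hK1
    have hKpos : (0:ℝ) < K := by exact_mod_cast hK1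
    have hsub : {ω : Ω | ε ≤ dist (S K ω / K) l} ⊆
        {ω | ε/2 * K ≤ |S K ω - ∫ ω', S K ω' ∂ℙ|} := by
      intro ω hω
      simp only [Set.mem_setOf_eq, Real.dist_eq] at hω ⊢
      rw [hmS K]
      by_contra hcon
      push_neg at hcon
      have e1 : |S K ω / K - (∑ k ∈ Finset.range K, m k)/(K:ℝ)| < ε/2 := by
        rw [div_sub_div_same, abs_div, abs_of_pos hKpos, div_lt_iff₀ hKpos]
        linarith
      linarith [abs_sub_le (S K ω / K) ((∑ k ∈ Finset.range K, m k)/(K:ℝ)) l]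
    refine le_trans (measure_mono hsub) ?_
    have hcpos : (0:ℝ) < ε/2 * K := by positivity
    refine le_trans (meas_ge_le_variance_div_sq (hS2 K) hcpos) ?_
    apply ENNReal.ofReal_le_ofReal
    have hden : (0:ℝ) < (ε/2 * K)^2 := by positivity
    calc variance (S K) ℙ / (ε/2 * K)^2 ≤ (K * C) / (ε/2 * K)^2 :=
          div_le_div_of_nonneg_right (hvS K) hden.le
      _ = C / ((ε/2)^2 * K) := by field_simp
  have hb : Tendsto (fun K : ℕ => ENNReal.ofReal (C / ((ε/2)^2 * K))) atTop (𝓝 0) := by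
    have h0 : Tendsto (fun K : ℕ => C / ((ε/2)^2 * K)) atTop (𝓝 0) := by
      have := tendsto_const_div_atTop_nhds_zero_nat (C / (ε/2)^2)
      convert this using 2 with K
      rw [div_div]
    have := ENNReal.tendsto_ofReal h0
    simpa using this
  exact tendsto_of_tendsto_of_tendsto_of_le_of_le' tendsto_const_nhds hb
    (Eventually.of_forall fun K => zero_le) hev

lemma slln {Z : ℕ → Ω → ℝ} (hint : Integrable (Z 0) ℙ)
    (hindep : ∀ i j, i ≠ j → IndepFun (Z i) (Z j) ℙ)
    (hident : ∀ i, IdentDistrib (Z i) (Z 0) ℙ ℙ) :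
    TendstoInMeasure (ℙ : Measure Ω) (fun K ω => (∑ k ∈ Finset.range K, Z k ω) / (K : ℝ))
      atTop (fun _ => ∫ ω, Z 0 ω ∂ℙ) := by
  have hae := strong_law_ae_real Z hint (fun i j hij => hindep i j hij) hident
  have hmeas : ∀ n : ℕ, AEStronglyMeasurable
      (fun ω => (∑ k ∈ Finset.range n, Z k ω) / (n : ℝ)) ℙ := by
    intro n
    refine (AEMeasurable.div_const ?_ _).aestronglyMeasurable
    exact Finset.aemeasurable_fun_sum _ fun i _ => (hident i).aemeasurable_fst
  exact tendstoInMeasure_of_tendsto_ae hmeas hae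

end LLN
section Pairing
variable {Ω : Type*} [MeasureSpace Ω] [IsProbabilityMeasure (ℙ : Measure Ω)]

lemma indepFun_pair_swap {α β : Type*} [MeasurableSpace α] [MeasurableSpace β]
    {X1 X2 : Ω → α} {Y1 Y2 : Ω → β}
    (hX1 : Measurable X1) (hX2 : Measurable X2) (hY1 : Measurable Y1) (hY2 : Measurable Y2)
    (hX : IndepFun X1 X2 ℙ) (hY : IndepFun Y1 Y2 ℙ)
    (hXY : IndepFun (fun ω => (X1 ω, X2 ω)) (fun ω => (Y1 ω, Y2 ω)) ℙ) :
    IndepFun (fun ω => (X1 ω, Y1 ω)) (fun ω => (X2 ω, Y2 ω)) ℙ := by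
  rw [IndepFun_iff_Indep]
  set R : Set (Set (α × β)) :=
    Set.image2 (· ×ˢ ·) { s : Set α | MeasurableSet s } { t : Set β | MeasurableSet t } with hR
  have hgen1 : MeasurableSpace.comap (fun ω => (X1 ω, Y1 ω)) inferInstance =
      MeasurableSpace.generateFrom (Set.preimage (fun ω => (X1 ω, Y1 ω)) '' R) := by
    conv_lhs => rw [← generateFrom_prod]
    rw [MeasurableSpace.comap_generateFrom]
  have hgen2 : MeasurableSpace.comap (fun ω => (X2 ω, Y2 ω)) inferInstance =
      MeasurableSpace.generateFrom (Set.preimage (fun ω => (X2 ω, Y2 ω)) '' R) := by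
    conv_lhs => rw [← generateFrom_prod]
    rw [MeasurableSpace.comap_generateFrom]
  rw [hgen1, hgen2]
  have hpi : IsPiSystem R := isPiSystem_prod
  refine IndepSets.indep' ?_ ?_ ?_ ?_ ?_
  · rintro s ⟨t, ⟨A, hA, B, hB, rfl⟩, rfl⟩
    exact (hX1 hA).inter (hY1 hB)
  · rintro s ⟨t, ⟨A, hA, B, hB, rfl⟩, rfl⟩
    exact (hX2 hA).inter (hY2 hB)
  · exact hpi.comap _
  · exact hpi.comap _
  · rintro s t ⟨s', ⟨A, hA, B, hB, rfl⟩, rfl⟩ ⟨t', ⟨C, hC, D, hD, rfl⟩, rfl⟩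
    refine Filter.Eventually.of_forall fun a => ?_
    simp only [Kernel.const_apply]
    have hs : (fun ω => (X1 ω, Y1 ω)) ⁻¹' (A ×ˢ B) = X1 ⁻¹' A ∩ Y1 ⁻¹' B := by
      ext ω; simp [Set.mem_prod]
    have ht : (fun ω => (X2 ω, Y2 ω)) ⁻¹' (C ×ˢ D) = X2 ⁻¹' C ∩ Y2 ⁻¹' D := by
      ext ω; simp [Set.mem_prod]
    rw [hs, ht]
    have hre : X1 ⁻¹' A ∩ Y1 ⁻¹' B ∩ (X2 ⁻¹' C ∩ Y2 ⁻¹' D) =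
        (fun ω => (X1 ω, X2 ω)) ⁻¹' (A ×ˢ C) ∩ (fun ω => (Y1 ω, Y2 ω)) ⁻¹' (B ×ˢ D) := by
      ext ω; simp [Set.mem_prod]; tauto
    rw [hre, hXY.measure_inter_preimage_eq_mul _ _ (hA.prod hC) (hB.prod hD)]
    have h1 : (fun ω => (X1 ω, X2 ω)) ⁻¹' (A ×ˢ C) = X1 ⁻¹' A ∩ X2 ⁻¹' C := by
      ext ω; simp [Set.mem_prod]
    have h2 : (fun ω => (Y1 ω, Y2 ω)) ⁻¹' (B ×ˢ D) = Y1 ⁻¹' B ∩ Y2 ⁻¹' D := by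
      ext ω; simp [Set.mem_prod]
    rw [h1, h2, hX.measure_inter_preimage_eq_mul _ _ hA hC,
      hY.measure_inter_preimage_eq_mul _ _ hB hD]
    have e1 : ℙ (X1 ⁻¹' A ∩ Y1 ⁻¹' B) = ℙ (X1 ⁻¹' A) * ℙ (Y1 ⁻¹' B) :=
      (hXY.comp measurable_fst measurable_fst).measure_inter_preimage_eq_mul _ _ hA hB
    have e2 : ℙ (X2 ⁻¹' C ∩ Y2 ⁻¹' D) = ℙ (X2 ⁻¹' C) * ℙ (Y2 ⁻¹' D) :=
      (hXY.comp measurable_snd measurable_snd).measure_inter_preimage_eq_mul _ _ hC hD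
    rw [e1, e2]
    ring

end Pairing
section Gauss

noncomputable def gmom (n : ℕ) : ℝ := ∫ x, x ^ n ∂(gaussianReal 0 1)

lemma g01_int_pow (n : ℕ) : Integrable (fun x : ℝ => x ^ n) (gaussianReal 0 1) := by
  rw [gaussianReal_of_var_ne_zero 0 one_ne_zero]
  rw [integrable_withDensity_iff (measurable_gaussianPDF 0 1)
    (Filter.Eventually.of_forall fun x => ENNReal.ofReal_lt_top)]
  have base : Integrable (fun x : ℝ => x ^ n * Real.exp (-(2⁻¹ : ℝ) * x ^ 2)) := by
    have hn : (-1 : ℝ) < (n : ℝ) := lt_of_lt_of_le (by norm_num) (Nat.cast_nonneg n)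
    have := integrable_rpow_mul_exp_neg_mul_sq (by norm_num : (0:ℝ) < 2⁻¹) hn
    simpa [Real.rpow_natCast] using this
  have heqf : (fun x : ℝ => x ^ n * ((gaussianPDF 0 1 x).toReal)) =
      fun x : ℝ => (Real.sqrt (2 * Real.pi * 1))⁻¹ * (x ^ n * Real.exp (-(2⁻¹ : ℝ) * x ^ 2)) := by
    funext x
    rw [gaussianPDF_def, ENNReal.toReal_ofReal (gaussianPDFReal_nonneg _ _ _), gaussianPDFReal]
    push_cast
    rw [show -(x - 0) ^ 2 / (2 * (1:ℝ)) = -(2⁻¹ : ℝ) * x ^ 2 by ring]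
    ring
  rw [heqf]
  exact base.const_mul _

lemma gaussianReal_eq_map (s : ℝ≥0) :
    gaussianReal 0 s = Measure.map (fun x => Real.sqrt s * x) (gaussianReal 0 1) := by
  have h := gaussianReal_map_const_mul (μ := 0) (v := 1) (Real.sqrt s)
  have hv : (⟨(Real.sqrt s) ^ 2, sq_nonneg _⟩ : ℝ≥0) * 1 = s := by
    ext
    simp [Real.sq_sqrt s.coe_nonneg]
  rw [h, mul_zero]
  congr 1
  exact hv.symm

lemma gint (s : ℝ≥0) (n : ℕ) :
    Integrable (fun x : ℝ => x ^ n) (gaussianReal 0 s) ∧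
      ∫ x, x ^ n ∂(gaussianReal 0 s) = (Real.sqrt s) ^ n * gmom n := by
  rw [gaussianReal_eq_map s]
  have hmeas : Measurable fun x : ℝ => Real.sqrt s * x := measurable_id.const_mul _
  have hpm : Measurable fun x : ℝ => x ^ n := measurable_id.pow_const n
  constructor
  · rw [integrable_map_measure hpm.aestronglyMeasurable hmeas.aemeasurable]
    have := (g01_int_pow n).const_mul ((Real.sqrt s) ^ n)
    exact this.congr (Filter.Eventually.of_forall fun x => by
      simp [Function.comp, mul_pow, mul_comm])
  · rw [integral_map hmeas.aemeasurable hpm.aestronglyMeasurable]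
    simp_rw [mul_pow]
    rw [integral_const_mul]
    rfl

lemma gaussian_moments {Ω : Type*} [MeasureSpace Ω] [IsProbabilityMeasure (ℙ : Measure Ω)]
    {X : Ω → ℝ} (hX : Measurable X) {s : ℝ≥0}
    (hmap : Measure.map X ℙ = gaussianReal 0 s) (n : ℕ) :
    Integrable (fun ω => X ω ^ n) ℙ ∧
      ∫ ω, X ω ^ n ∂ℙ = (Real.sqrt s) ^ n * gmom n := by
  have hpm : Measurable fun x : ℝ => x ^ n := measurable_id.pow_const n
  have hint : Integrable (fun x : ℝ => x ^ n) (Measure.map X ℙ) := by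
    rw [hmap]; exact (gint s n).1
  constructor
  · exact (integrable_map_measure hpm.aestronglyMeasurable hX.aemeasurable).1 hint
  · have : ∫ ω, X ω ^ n ∂ℙ = ∫ x, x ^ n ∂(Measure.map X ℙ) :=
      (integral_map hX.aemeasurable hpm.aestronglyMeasurable).symm
    rw [this, hmap]
    exact (gint s n).2

lemma gmom_two_pos : 0 < gmom 2 := by
  rw [gmom]
  rw [integral_pos_iff_support_of_nonneg (fun x => sq_nonneg x) (g01_int_pow 2)]
  have hsupp : (Function.support fun x : ℝ => x ^ 2) = {(0:ℝ)}ᶜ := by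
    ext x
    simp [Function.support, pow_eq_zero_iff]
  rw [hsupp]
  have h0 : (gaussianReal 0 1) {(0:ℝ)} = 0 := by
    refine (gaussianReal_absolutelyContinuous 0 one_ne_zero) ?_
    simp
  rw [measure_compl (measurableSet_singleton 0) (measure_ne_top _ _), h0]
  simp

lemma gmom_four_nonneg : 0 ≤ gmom 4 := by
  rw [gmom]
  exact integral_nonneg fun x => by positivity

end Gauss

private lemma div_div_aux {a b c : ℝ} (hc : c ≠ 0) : (a/c)/(b/c) = a/b := by
  rcases eq_or_ne b 0 with rfl | hb
  · simp
  · field_simp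


/-- The BCES (bias-corrected errors-in-variables) slope estimator of Akritas–Bershady, based
on noisy data `(x k ω, y k ω)`, `k = 0, …, K-1`, with known measurement-error variances
`cuu k` for the regressor and error covariances `cuv k`. -/
noncomputable def bcesSlope {Ω : Type*} (K : ℕ) (x y : ℕ → Ω → ℝ) (cuu cuv : ℕ → ℝ)
    (ω : Ω) : ℝ :=
  ((∑ k ∈ Finset.range K, (x k ω - (∑ j ∈ Finset.range K, x j ω) / K) * y k ω) -
      ∑ k ∈ Finset.range K, cuv k) /
  ((∑ k ∈ Finset.range K, (x k ω - (∑ j ∈ Finset.range K, x j ω) / K) ^ 2) -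
      ∑ k ∈ Finset.range K, cuu k)

/-- Consistency of the BCES estimator: `((γ_k, δ_k))` i.i.d. square-integrable with
`Var(γ_0) > 0` and `Cov(γ_0, δ_0) = 0`, `τ_k = δ_k + β·γ_k`; the measurement-error pairs
`(u_k, v_k)` are jointly Gaussian and mean-zero (every linear combination is a centered
Gaussian), independent across `k` and independent of `((γ_k, δ_k))`, with
`Var(u_k) = σ²_{uk} > 0`, `Var(v_k) < ∞` and `Cov(u_k, v_k) = σ_{uv,k}`; observed
`γ̂_k = γ_k + u_k`, `τ̂_k = τ_k + v_k`. Under `Σ Var(γ̂_k²)/k² < ∞`,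
`sup_k σ²_{uk} < ∞`, `sup_k Var(v_k) < ∞`, and convergence of `K⁻¹ Σ σ²_{uk}` and
`K⁻¹ Σ σ_{uv,k}` to finite limits, the BCES slope converges in probability to `β`. -/
theorem bces_slope_consistent
    {Ω : Type*} [MeasureSpace Ω] [IsProbabilityMeasure (ℙ : Measure Ω)]
    (γ δ u v : ℕ → Ω → ℝ) (β : ℝ) (σu σuv : ℕ → ℝ) (su suv : ℝ)
    (hmγ : ∀ k, Measurable (γ k)) (hmδ : ∀ k, Measurable (δ k))
    (hmu : ∀ k, Measurable (u k)) (hmv : ∀ k, Measurable (v k))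
    (hindep : iIndepFun (fun k ω => (γ k ω, δ k ω)) ℙ)
    (hident : ∀ k, IdentDistrib (fun ω => (γ k ω, δ k ω)) (fun ω => (γ 0 ω, δ 0 ω)) ℙ ℙ)
    (hγ2 : MemLp (γ 0) 2 ℙ) (hδ2 : MemLp (δ 0) 2 ℙ)
    (hvar : 0 < variance (γ 0) ℙ)
    (hcov : ∫ ω, (γ 0 ω - ∫ ω', γ 0 ω' ∂ℙ) * (δ 0 ω - ∫ ω', δ 0 ω' ∂ℙ) ∂ℙ = 0)
    (hGauss : ∀ k, ∀ a c : ℝ, ∃ s : ℝ≥0,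
      Measure.map (fun ω => a * u k ω + c * v k ω) ℙ = gaussianReal 0 s)
    (hu0 : ∀ k, ∫ ω, u k ω ∂ℙ = 0) (hv0 : ∀ k, ∫ ω, v k ω ∂ℙ = 0)
    (hu2 : ∀ k, MemLp (u k) 2 ℙ) (hv2 : ∀ k, MemLp (v k) 2 ℙ)
    (hvaru : ∀ k, variance (u k) ℙ = σu k) (hσupos : ∀ k, 0 < σu k)
    (hcovuv : ∀ k, ∫ ω, u k ω * v k ω ∂ℙ = σuv k)
    (huvIndep : iIndepFun (fun k ω => (u k ω, v k ω)) ℙ)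
    (huvγδ : IndepFun (fun ω (k : ℕ) => (u k ω, v k ω)) (fun ω (k : ℕ) => (γ k ω, δ k ω)) ℙ)
    (hkolmogorov : Summable (fun k : ℕ =>
      variance (fun ω => (γ k ω + u k ω) ^ 2) ℙ / ((k : ℝ) + 1) ^ 2))
    (hbddu : BddAbove (Set.range σu))
    (hbddv : BddAbove (Set.range fun k => variance (v k) ℙ))
    (hlimu : Tendsto (fun K : ℕ => (∑ k ∈ Finset.range K, σu k) / K) atTop (𝓝 su))
    (hlimuv : Tendsto (fun K : ℕ => (∑ k ∈ Finset.range K, σuv k) / K) atTop (𝓝 suv)) :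
    TendstoInMeasure ℙ
      (fun K => bcesSlope K (fun k ω' => γ k ω' + u k ω')
        (fun k ω' => (δ k ω' + β * γ k ω') + v k ω') σu σuv)
      atTop (fun _ => β) := by
  classical
  -- measurability of pairs
  have hmG : ∀ k, Measurable fun ω => (γ k ω, δ k ω) := fun k => (hmγ k).prodMk (hmδ k)
  have hmU : ∀ k, Measurable fun ω => (u k ω, v k ω) := fun k => (hmu k).prodMk (hmv k)
  -- pairwise independence of the full 4-tuples
  have hWpair : ∀ i j, i ≠ j → IndepFun
      (fun ω => ((γ i ω, δ i ω), (u i ω, v i ω)))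
      (fun ω => ((γ j ω, δ j ω), (u j ω, v j ω))) ℙ := by
    intro i j hij
    refine indepFun_pair_swap (hmG i) (hmG j) (hmU i) (hmU j)
      (hindep.indepFun hij) (huvIndep.indepFun hij) ?_
    have := huvγδ.symm.comp
      (show Measurable fun p : ℕ → ℝ × ℝ => (p i, p j) from
        (measurable_pi_apply i).prodMk (measurable_pi_apply j))
      (show Measurable fun p : ℕ → ℝ × ℝ => (p i, p j) from
        (measurable_pi_apply i).prodMk (measurable_pi_apply j))
    exact this
  -- within-index independence of noise and signal
  have hUGk : ∀ k, IndepFun (fun ω => (u k ω, v k ω)) (fun ω => (γ k ω, δ k ω)) ℙ :=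
    fun k => huvγδ.comp (measurable_pi_apply k) (measurable_pi_apply k)
  -- identically distributed transfers
  have hγid : ∀ k, IdentDistrib (γ k) (γ 0) ℙ ℙ := fun k => (hident k).comp measurable_fst
  have hδid : ∀ k, IdentDistrib (δ k) (δ 0) ℙ ℙ := fun k => (hident k).comp measurable_snd
  have hγ2k : ∀ k, MemLp (γ k) 2 ℙ := fun k => (hγid k).symm.memLp_snd hγ2
  have hδ2k : ∀ k, MemLp (δ k) 2 ℙ := fun k => (hδid k).symm.memLp_snd hδ2
  have hτ2k : ∀ k, MemLp (fun ω => δ k ω + β * γ k ω) 2 ℙ :=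
    fun k => (hδ2k k).add ((hγ2k k).const_mul β)
  set mγ : ℝ := ∫ ω, γ 0 ω ∂ℙ with hmγ0
  set mδ : ℝ := ∫ ω, δ 0 ω ∂ℙ with hmδ0
  set g2 : ℝ := ∫ ω, γ 0 ω ^ 2 ∂ℙ with hg2
  set t2 : ℝ := ∫ ω, (δ 0 ω + β * γ 0 ω) ^ 2 ∂ℙ with ht2
  have hgsq : ∀ k, ∫ ω, γ k ω ^ 2 ∂ℙ = g2 :=
    fun k => ((hγid k).comp (measurable_id.pow_const 2)).integral_eq
  have htsq : ∀ k, ∫ ω, (δ k ω + β * γ k ω) ^ 2 ∂ℙ = t2 :=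
    fun k => (((hident k).comp
      ((measurable_snd.add (measurable_fst.const_mul β)).pow_const 2)).integral_eq)
  have hg2nn : 0 ≤ g2 := integral_nonneg fun ω => sq_nonneg _
  have ht2nn : 0 ≤ t2 := integral_nonneg fun ω => sq_nonneg _
  -- sup bounds
  obtain ⟨Cu, hCu⟩ := hbddu
  have hCu' : ∀ k, σu k ≤ Cu := fun k => hCu (Set.mem_range_self k)
  have hCu0 : 0 ≤ Cu := le_trans (hσupos 0).le (hCu' 0)
  obtain ⟨Cv, hCv⟩ := hbddv
  have hCv' : ∀ k, variance (v k) ℙ ≤ Cv := fun k => hCv (Set.mem_range_self k)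
  have hCv0 : 0 ≤ Cv := le_trans (variance_nonneg _ _) (hCv' 0)
  -- second moments of the noise
  have husq : ∀ k, ∫ ω, u k ω ^ 2 ∂ℙ = σu k := by
    intro k
    have h := variance_eq_sub (hu2 k)
    rw [hvaru k] at h
    simpa [hu0 k] using h.symm
  have hvsq : ∀ k, ∫ ω, v k ω ^ 2 ∂ℙ = variance (v k) ℙ := by
    intro k
    have h := variance_eq_sub (hv2 k)
    simpa [hv0 k] using h.symm
  -- Gaussian fourth moments
  have hGu : ∀ k, Integrable (fun ω => u k ω ^ 4) ℙ ∧
      ∫ ω, u k ω ^ 4 ∂ℙ = gmom 4 / gmom 2 ^ 2 * σu k ^ 2 := by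
    intro k
    obtain ⟨s, hs⟩ := hGauss k 1 0
    have hfun : (fun ω => 1 * u k ω + 0 * v k ω) = u k := funext fun ω => by ring
    rw [hfun] at hs
    have h4 := gaussian_moments (hmu k) hs 4
    have h2' := gaussian_moments (hmu k) hs 2
    have hs2 : (Real.sqrt s) ^ 2 = (s : ℝ) := Real.sq_sqrt s.coe_nonneg
    have hσ : σu k = (s : ℝ) * gmom 2 := by rw [← husq k, h2'.2, hs2]
    have hs' : (s : ℝ) = σu k / gmom 2 := by
      rw [hσ, mul_div_cancel_right₀ _ gmom_two_pos.ne']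
    refine ⟨h4.1, ?_⟩
    rw [h4.2, show (Real.sqrt s) ^ 4 = ((Real.sqrt s) ^ 2) ^ 2 by ring, hs2, hs', div_pow]
    ring
  have hGv : ∀ k, Integrable (fun ω => v k ω ^ 4) ℙ ∧
      ∫ ω, v k ω ^ 4 ∂ℙ = gmom 4 / gmom 2 ^ 2 * variance (v k) ℙ ^ 2 := by
    intro k
    obtain ⟨s, hs⟩ := hGauss k 0 1
    have hfun : (fun ω => 0 * u k ω + 1 * v k ω) = v k := funext fun ω => by ring
    rw [hfun] at hs
    have h4 := gaussian_moments (hmv k) hs 4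
    have h2' := gaussian_moments (hmv k) hs 2
    have hs2 : (Real.sqrt s) ^ 2 = (s : ℝ) := Real.sq_sqrt s.coe_nonneg
    have hσ : variance (v k) ℙ = (s : ℝ) * gmom 2 := by rw [← hvsq k, h2'.2, hs2]
    have hs' : (s : ℝ) = variance (v k) ℙ / gmom 2 := by
      rw [hσ, mul_div_cancel_right₀ _ gmom_two_pos.ne']
    refine ⟨h4.1, ?_⟩
    rw [h4.2, show (Real.sqrt s) ^ 4 = ((Real.sqrt s) ^ 2) ^ 2 by ring, hs2, hs', div_pow]
    ring
  have hgm0 : 0 ≤ gmom 4 / gmom 2 ^ 2 := div_nonneg gmom_four_nonneg (sq_nonneg _)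
  -- product helper
  have hprod : ∀ (f g : Ω → ℝ), Measurable f → Measurable g → IndepFun f g ℙ →
      MemLp f 2 ℙ → MemLp g 2 ℙ →
      MemLp (fun ω => f ω * g ω) 2 ℙ ∧
      variance (fun ω => f ω * g ω) ℙ ≤ (∫ ω, f ω ^ 2 ∂ℙ) * ∫ ω, g ω ^ 2 ∂ℙ ∧
      ∫ ω, f ω * g ω ∂ℙ = (∫ ω, f ω ∂ℙ) * ∫ ω, g ω ∂ℙ := by
    intro f g hf hg hfg hf2 hg2'
    have hsq : IndepFun (fun ω => f ω ^ 2) (fun ω => g ω ^ 2) ℙ :=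
      hfg.comp (measurable_id.pow_const 2) (measurable_id.pow_const 2)
    have hint : Integrable (fun ω => f ω ^ 2 * g ω ^ 2) ℙ :=
      hsq.integrable_mul hf2.integrable_sq hg2'.integrable_sq
    have hm2 : MemLp (fun ω => f ω * g ω) 2 ℙ := by
      rw [memLp_two_iff_integrable_sq (f := fun ω => f ω * g ω) ((hf.mul hg).aestronglyMeasurable)]
      exact hint.congr (Filter.Eventually.of_forall fun ω => by simp [mul_pow])
    have hveq : ∫ ω, (f ω * g ω) ^ 2 ∂ℙ = (∫ ω, f ω ^ 2 ∂ℙ) * ∫ ω, g ω ^ 2 ∂ℙ := by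
      rw [show (fun ω => (f ω * g ω) ^ 2) = fun ω => f ω ^ 2 * g ω ^ 2 from
        funext fun ω => by ring]
      exact hsq.integral_fun_mul_eq_mul_integral hf2.integrable_sq.aestronglyMeasurable hg2'.integrable_sq.aestronglyMeasurable
    refine ⟨hm2, ?_, hfg.integral_fun_mul_eq_mul_integral (hf2.integrable one_le_two).aestronglyMeasurable
      (hg2'.integrable one_le_two).aestronglyMeasurable⟩
    calc variance (fun ω => f ω * g ω) ℙ ≤ ∫ ω, (f ω * g ω) ^ 2 ∂ℙ := by
          have := variance_le_expectation_sq (μ := (ℙ : Measure Ω))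
            ((hf.mul hg).aestronglyMeasurable)
          exact this
      _ = _ := hveq
  -- pairwise independence of derived sequences
  have hpairF : ∀ (F : (ℝ × ℝ) × (ℝ × ℝ) → ℝ), Measurable F → ∀ i j, i ≠ j →
      IndepFun (fun ω => F ((γ i ω, δ i ω), (u i ω, v i ω)))
               (fun ω => F ((γ j ω, δ j ω), (u j ω, v j ω))) ℙ :=
    fun F hF i j hij => (hWpair i j hij).comp hF hF
  -- zero average
  have hml0 : Tendsto (fun K : ℕ => (∑ _k ∈ Finset.range K, (0:ℝ)) / (K : ℝ)) atTop (𝓝 0) := by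
    simpa using (tendsto_const_nhds : Tendsto (fun _ : ℕ => (0:ℝ)) atTop (𝓝 0))
  -- individual limits
  have Hγ : TendstoInMeasure (ℙ : Measure Ω)
      (fun K ω => (∑ k ∈ Finset.range K, γ k ω) / (K : ℝ)) atTop (fun _ => mγ) := by
    exact slln (hγ2.integrable one_le_two)
      (fun i j hij => (hindep.indepFun hij).comp measurable_fst measurable_fst) hγid
  have Hτ : TendstoInMeasure (ℙ : Measure Ω)
      (fun K ω => (∑ k ∈ Finset.range K, (δ k ω + β * γ k ω)) / (K : ℝ)) atTop
      (fun _ => ∫ ω, (δ 0 ω + β * γ 0 ω) ∂ℙ) := by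
    exact slln ((hτ2k 0).integrable one_le_two)
      (fun i j hij => (hindep.indepFun hij).comp
        (measurable_snd.add (measurable_fst.const_mul β))
        (measurable_snd.add (measurable_fst.const_mul β)))
      (fun i => (hident i).comp (measurable_snd.add (measurable_fst.const_mul β)))
  have Hγsq : TendstoInMeasure (ℙ : Measure Ω)
      (fun K ω => (∑ k ∈ Finset.range K, γ k ω ^ 2) / (K : ℝ)) atTop (fun _ => g2) := by
    have := slln (Z := fun k ω => γ k ω ^ 2) hγ2.integrable_sq
      (fun i j hij => (hindep.indepFun hij).comp (measurable_fst.pow_const 2)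
        (measurable_fst.pow_const 2))
      (fun i => (hγid i).comp (measurable_id.pow_const 2))
    exact this
  have Hu : TendstoInMeasure (ℙ : Measure Ω)
      (fun K ω => (∑ k ∈ Finset.range K, u k ω) / (K : ℝ)) atTop (fun _ => 0) := by
    refine wlln hu2 (hpairF (fun p => p.2.1) (by fun_prop)) (C := Cu)
      (fun k => by rw [hvaru k]; exact hCu' k) (fun _ => 0) hu0 hml0
  have Hv : TendstoInMeasure (ℙ : Measure Ω)
      (fun K ω => (∑ k ∈ Finset.range K, v k ω) / (K : ℝ)) atTop (fun _ => 0) := by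
    refine wlln hv2 (hpairF (fun p => p.2.2) (by fun_prop)) (C := Cv)
      (fun k => hCv' k) (fun _ => 0) hv0 hml0
  -- integrable products of the signal
  have hγint : Integrable (γ 0) ℙ := hγ2.integrable one_le_two
  have hδint : Integrable (δ 0) ℙ := hδ2.integrable one_le_two
  have hγδint : Integrable (fun ω => γ 0 ω * δ 0 ω) ℙ := by
    have h := MemLp.smul (𝕜 := ℝ) (p := 2) (q := 2) (r := 1) hδ2 hγ2
    exact memLp_one_iff_integrable.1 h
  have hγsqint : Integrable (fun ω => γ 0 ω ^ 2) ℙ := hγ2.integrable_sq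
  -- E[γδ] = mγ mδ from zero covariance
  have hγδmean : ∫ ω, γ 0 ω * δ 0 ω ∂ℙ = mγ * mδ := by
    have hexp : (fun ω => (γ 0 ω - mγ) * (δ 0 ω - mδ)) =
        fun ω => γ 0 ω * δ 0 ω - mγ * δ 0 ω - mδ * γ 0 ω + mγ * mδ :=
      funext fun ω => by ring
    have h0 : ∫ ω, (γ 0 ω - mγ) * (δ 0 ω - mδ) ∂ℙ = 0 := hcov
    have hI2 : Integrable (fun ω => γ 0 ω * δ 0 ω - mγ * δ 0 ω) ℙ :=
      hγδint.sub (hδint.const_mul mγ)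
    have hI1 : Integrable (fun ω => γ 0 ω * δ 0 ω - mγ * δ 0 ω - mδ * γ 0 ω) ℙ :=
      hI2.sub (hγint.const_mul mδ)
    rw [hexp, integral_add hI1 (integrable_const _), integral_sub hI2
      (hγint.const_mul mδ), integral_sub hγδint (hδint.const_mul mγ),
      integral_const_mul, integral_const_mul, integral_const] at h0
    simp only [measure_univ, ENNReal.toReal_one, smul_eq_mul, one_mul, probReal_univ] at h0
    rw [← hmγ0, ← hmδ0] at h0
    linarith
  -- γτ average
  have Hγτ : TendstoInMeasure (ℙ : Measure Ω)
      (fun K ω => (∑ k ∈ Finset.range K, γ k ω * (δ k ω + β * γ k ω)) / (K : ℝ)) atTop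
      (fun _ => mγ * mδ + β * g2) := by
    have hintγτ : Integrable (fun ω => γ 0 ω * (δ 0 ω + β * γ 0 ω)) ℙ := by
      have := hγδint.add (hγsqint.const_mul β)
      exact this.congr (Filter.Eventually.of_forall fun ω => by simp only [Pi.add_apply]; ring)
    have hval : ∫ ω, γ 0 ω * (δ 0 ω + β * γ 0 ω) ∂ℙ = mγ * mδ + β * g2 := by
      rw [show (fun ω => γ 0 ω * (δ 0 ω + β * γ 0 ω)) =
        fun ω => γ 0 ω * δ 0 ω + β * γ 0 ω ^ 2 from funext fun ω => by ring]
      rw [integral_add hγδint (hγsqint.const_mul β), integral_const_mul, hγδmean, ← hg2]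
    have h := slln (Z := fun k ω => γ k ω * (δ k ω + β * γ k ω)) hintγτ
      (fun i j hij => (hindep.indepFun hij).comp
        (measurable_fst.mul (measurable_snd.add (measurable_fst.const_mul β)))
        (measurable_fst.mul (measurable_snd.add (measurable_fst.const_mul β))))
      (fun i => (hident i).comp
        (measurable_fst.mul (measurable_snd.add (measurable_fst.const_mul β))))
    simp only [hval] at h
    exact h
  -- γv average
  have Hγv : TendstoInMeasure (ℙ : Measure Ω)
      (fun K ω => (∑ k ∈ Finset.range K, γ k ω * v k ω) / (K : ℝ)) atTop (fun _ => 0) := by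
    have hk := fun k => hprod (γ k) (v k) (hmγ k) (hmv k)
      ((hUGk k).symm.comp measurable_fst measurable_snd) (hγ2k k) (hv2 k)
    refine wlln (fun k => (hk k).1) (hpairF (fun p => p.1.1 * p.2.2) (by fun_prop))
      (C := g2 * Cv) ?_ (fun _ => 0) ?_ hml0
    · intro k
      refine le_trans (hk k).2.1 ?_
      rw [hgsq k, hvsq k]
      exact mul_le_mul_of_nonneg_left (hCv' k) hg2nn
    · intro k
      rw [(hk k).2.2, hv0 k, mul_zero]
  -- uτ average
  have Huτ : TendstoInMeasure (ℙ : Measure Ω)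
      (fun K ω => (∑ k ∈ Finset.range K, u k ω * (δ k ω + β * γ k ω)) / (K : ℝ)) atTop
      (fun _ => 0) := by
    have hk := fun k => hprod (u k) (fun ω => δ k ω + β * γ k ω) (hmu k)
      ((hmδ k).add ((hmγ k).const_mul β))
      ((hUGk k).comp measurable_fst (measurable_snd.add (measurable_fst.const_mul β)))
      (hu2 k) (hτ2k k)
    refine wlln (fun k => (hk k).1)
      (hpairF (fun p => p.2.1 * (p.1.2 + β * p.1.1)) (by fun_prop))
      (C := Cu * t2) ?_ (fun _ => 0) ?_ hml0
    · intro k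
      refine le_trans (hk k).2.1 ?_
      rw [husq k, htsq k]
      exact mul_le_mul_of_nonneg_right (hCu' k) ht2nn
    · intro k
      rw [(hk k).2.2, hu0 k, zero_mul]
  -- uv average
  have Huv : TendstoInMeasure (ℙ : Measure Ω)
      (fun K ω => (∑ k ∈ Finset.range K, u k ω * v k ω) / (K : ℝ)) atTop
      (fun _ => suv) := by
    have hintuv2 : ∀ k, Integrable (fun ω => (u k ω * v k ω) ^ 2) ℙ := by
      intro k
      refine Integrable.mono' (((hGu k).1.add (hGv k).1).div_const 2)
        ((((hmu k).mul (hmv k)).pow_const 2).aestronglyMeasurable)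
        (Filter.Eventually.of_forall fun ω => ?_)
      rw [Real.norm_eq_abs, abs_of_nonneg (sq_nonneg _)]
      simp only [Pi.add_apply]
      nlinarith [sq_nonneg (u k ω ^ 2 - v k ω ^ 2)]
    have hm2uv : ∀ k, MemLp (fun ω => u k ω * v k ω) 2 ℙ := fun k =>
      (memLp_two_iff_integrable_sq (((hmu k).mul (hmv k)).aestronglyMeasurable)).2
        (hintuv2 k)
    refine wlln hm2uv (hpairF (fun p => p.2.1 * p.2.2) (by fun_prop))
      (C := (gmom 4 / gmom 2 ^ 2 * Cu ^ 2 + gmom 4 / gmom 2 ^ 2 * Cv ^ 2) / 2) ?_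
      σuv hcovuv hlimuv
    intro k
    have hvb : variance (fun ω => u k ω * v k ω) ℙ ≤ ∫ ω, (u k ω * v k ω) ^ 2 ∂ℙ := by
      have := variance_le_expectation_sq (μ := (ℙ : Measure Ω))
        (((hmu k).mul (hmv k)).aestronglyMeasurable)
      exact this
    refine le_trans hvb ?_
    have hb1 : ∫ ω, (u k ω * v k ω) ^ 2 ∂ℙ ≤
        ∫ ω, (u k ω ^ 4 + v k ω ^ 4) / 2 ∂ℙ := by
      refine integral_mono (hintuv2 k) (((hGu k).1.add (hGv k).1).div_const 2) ?_
      intro ω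
      simp only [Pi.add_apply]
      nlinarith [sq_nonneg (u k ω ^ 2 - v k ω ^ 2)]
    refine le_trans hb1 ?_
    rw [integral_div, integral_add (hGu k).1 (hGv k).1, (hGu k).2, (hGv k).2]
    have h1 : gmom 4 / gmom 2 ^ 2 * σu k ^ 2 ≤ gmom 4 / gmom 2 ^ 2 * Cu ^ 2 :=
      mul_le_mul_of_nonneg_left (pow_le_pow_left₀ (hσupos k).le (hCu' k) 2) hgm0
    have h2 : gmom 4 / gmom 2 ^ 2 * variance (v k) ℙ ^ 2 ≤ gmom 4 / gmom 2 ^ 2 * Cv ^ 2 :=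
      mul_le_mul_of_nonneg_left (pow_le_pow_left₀ (variance_nonneg _ _) (hCv' k) 2) hgm0
    have := add_le_add h1 h2
    linarith
  -- 2γu average
  have H2γu : TendstoInMeasure (ℙ : Measure Ω)
      (fun K ω => (∑ k ∈ Finset.range K, 2 * (γ k ω * u k ω)) / (K : ℝ)) atTop
      (fun _ => 0) := by
    have hk := fun k => hprod (γ k) (u k) (hmγ k) (hmu k)
      ((hUGk k).symm.comp measurable_fst measurable_fst) (hγ2k k) (hu2 k)
    have hsqind : ∀ k, IndepFun (fun ω => γ k ω ^ 2) (fun ω => u k ω ^ 2) ℙ := fun k =>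
      ((hUGk k).symm.comp measurable_fst measurable_fst).comp
        (measurable_id.pow_const 2) (measurable_id.pow_const 2)
    refine wlln (fun k => ((hk k).1).const_mul 2)
      (hpairF (fun p => 2 * (p.1.1 * p.2.1)) (by fun_prop))
      (C := 4 * (g2 * Cu)) ?_ (fun _ => 0) ?_ hml0
    · intro k
      have hvb : variance (fun ω => 2 * (γ k ω * u k ω)) ℙ ≤
          ∫ ω, (2 * (γ k ω * u k ω)) ^ 2 ∂ℙ := by
        have := variance_le_expectation_sq (μ := (ℙ : Measure Ω))
          ((((hmγ k).mul (hmu k)).const_mul 2).aestronglyMeasurable)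
        simpa using this
      refine le_trans hvb ?_
      have he : (fun ω => (2 * (γ k ω * u k ω)) ^ 2) =
          fun ω => 4 * (γ k ω ^ 2 * u k ω ^ 2) := funext fun ω => by ring
      rw [he, integral_const_mul]
      have heq2 : ∫ ω, γ k ω ^ 2 * u k ω ^ 2 ∂ℙ =
          (∫ ω, γ k ω ^ 2 ∂ℙ) * ∫ ω, u k ω ^ 2 ∂ℙ :=
        (hsqind k).integral_fun_mul_eq_mul_integral (hγ2k k).integrable_sq.aestronglyMeasurable (hu2 k).integrable_sq.aestronglyMeasurable
      rw [heq2, hgsq k, husq k]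
      have : g2 * σu k ≤ g2 * Cu := mul_le_mul_of_nonneg_left (hCu' k) hg2nn
      linarith
    · intro k
      rw [integral_const_mul, (hk k).2.2, hu0 k, mul_zero, mul_zero]
  -- u² average
  have Hu2 : TendstoInMeasure (ℙ : Measure Ω)
      (fun K ω => (∑ k ∈ Finset.range K, u k ω ^ 2) / (K : ℝ)) atTop (fun _ => su) := by
    refine wlln (fun k => (memLp_two_iff_integrable_sq
        (((hmu k).pow_const 2).aestronglyMeasurable)).2
        ((hGu k).1.congr (Filter.Eventually.of_forall fun ω => by simp [← pow_mul])))
      (hpairF (fun p => p.2.1 ^ 2) (by fun_prop))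
      (C := gmom 4 / gmom 2 ^ 2 * Cu ^ 2) ?_ σu husq hlimu
    intro k
    have hvb : variance (fun ω => u k ω ^ 2) ℙ ≤ ∫ ω, (u k ω ^ 2) ^ 2 ∂ℙ := by
      have := variance_le_expectation_sq (μ := (ℙ : Measure Ω))
        (((hmu k).pow_const 2).aestronglyMeasurable)
      simpa using this
    refine le_trans hvb ?_
    have he : (fun ω => (u k ω ^ 2) ^ 2) = fun ω => u k ω ^ 4 := funext fun ω => by ring
    rw [he, (hGu k).2]
    exact mul_le_mul_of_nonneg_left (pow_le_pow_left₀ (hσupos k).le (hCu' k) 2) hgm0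
  -- assembled averages
  have Hx : TendstoInMeasure (ℙ : Measure Ω)
      (fun K ω => (∑ k ∈ Finset.range K, (γ k ω + u k ω)) / (K : ℝ)) atTop
      (fun _ => mγ) := by
    have h := tim_add Hγ Hu
    simp only [add_zero] at h
    refine tim_congr (Filter.Eventually.of_forall fun K ω => ?_) h
    rw [← add_div, ← Finset.sum_add_distrib]
  have hmτval : (∫ ω, (δ 0 ω + β * γ 0 ω) ∂ℙ) = mδ + β * mγ := by
    rw [integral_add hδint (hγint.const_mul β), integral_const_mul, ← hmδ0, ← hmγ0]
  have Hy : TendstoInMeasure (ℙ : Measure Ω)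
      (fun K ω => (∑ k ∈ Finset.range K, ((δ k ω + β * γ k ω) + v k ω)) / (K : ℝ)) atTop
      (fun _ => mδ + β * mγ) := by
    have h := tim_add Hτ Hv
    simp only [hmτval, add_zero] at h
    refine tim_congr (Filter.Eventually.of_forall fun K ω => ?_) h
    rw [← add_div, ← Finset.sum_add_distrib]
  have Hxy : TendstoInMeasure (ℙ : Measure Ω)
      (fun K ω => (∑ k ∈ Finset.range K,
        (γ k ω + u k ω) * ((δ k ω + β * γ k ω) + v k ω)) / (K : ℝ)) atTop
      (fun _ => (mγ * mδ + β * g2) + suv) := by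
    have h := tim_add (tim_add (tim_add Hγτ Hγv) Huτ) Huv
    simp only [add_zero] at h
    refine tim_congr (Filter.Eventually.of_forall fun K ω => ?_) h
    rw [← add_div, ← add_div, ← add_div, ← Finset.sum_add_distrib,
      ← Finset.sum_add_distrib, ← Finset.sum_add_distrib]
    congr 1
    exact Finset.sum_congr rfl fun k _ => by ring
  have Hxx : TendstoInMeasure (ℙ : Measure Ω)
      (fun K ω => (∑ k ∈ Finset.range K, (γ k ω + u k ω) ^ 2) / (K : ℝ)) atTop
      (fun _ => g2 + su) := by
    have h := tim_add (tim_add Hγsq H2γu) Hu2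
    simp only [add_zero] at h
    refine tim_congr (Filter.Eventually.of_forall fun K ω => ?_) h
    rw [← add_div, ← add_div, ← Finset.sum_add_distrib,
      ← Finset.sum_add_distrib]
    congr 1
    exact Finset.sum_congr rfl fun k _ => by ring
  have Hcu := tim_det (Ω := Ω) (fun K : ℕ => (∑ k ∈ Finset.range K, σu k) / (K : ℝ)) su hlimu
  have Hcv := tim_det (Ω := Ω) (fun K : ℕ => (∑ k ∈ Finset.range K, σuv k) / (K : ℝ)) suv hlimuv
  have Hnum := tim_sub (tim_sub Hxy (tim_mul Hx Hy)) Hcv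
  have Hden := tim_sub (tim_sub Hxx (tim_mul Hx Hx)) Hcu
  have hVγ : variance (γ 0) ℙ = g2 - mγ ^ 2 := by
    have h := variance_eq_sub hγ2
    simp only [Pi.pow_apply] at h
    rw [h, ← hg2, ← hmγ0]
  have hdenc : g2 + su - mγ * mγ - su = variance (γ 0) ℙ := by rw [hVγ]; ring
  have hne : g2 + su - mγ * mγ - su ≠ 0 := by rw [hdenc]; exact hvar.ne'
  have Hdiv := tim_div hne Hnum Hden
  have hc : (mγ * mδ + β * g2 + suv - mγ * (mδ + β * mγ) - suv) /
      (g2 + su - mγ * mγ - su) = β := by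
    rw [hdenc, show mγ * mδ + β * g2 + suv - mγ * (mδ + β * mγ) - suv
      = β * variance (γ 0) ℙ by rw [hVγ]; ring]
    exact mul_div_cancel_right₀ β hvar.ne'
  simp only [hc] at Hdiv
  refine tim_congr ?_ Hdiv
  filter_upwards [eventually_ge_atTop 1] with K hK
  intro ω
  have hKne : (K : ℝ) ≠ 0 := Nat.cast_ne_zero.mpr (by omega)
  simp only [bcesSlope]
  set A : ℝ := ∑ k ∈ Finset.range K, (γ k ω + u k ω) with hA
  set Y : ℝ := ∑ k ∈ Finset.range K, ((δ k ω + β * γ k ω) + v k ω) with hY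
  set P : ℝ := ∑ k ∈ Finset.range K, (γ k ω + u k ω) * ((δ k ω + β * γ k ω) + v k ω) with hP
  set Q : ℝ := ∑ k ∈ Finset.range K, (γ k ω + u k ω) ^ 2 with hQ
  have e1 : ∑ k ∈ Finset.range K,
      (γ k ω + u k ω - A / (K : ℝ)) * (δ k ω + β * γ k ω + v k ω)
      = P - (A / (K : ℝ)) * Y := by
    rw [hP, hY, Finset.mul_sum, ← Finset.sum_sub_distrib]
    exact Finset.sum_congr rfl fun k _ => by ring
  have e2 : ∑ k ∈ Finset.range K, (γ k ω + u k ω - A / (K : ℝ)) ^ 2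
      = Q - 2 * (A / (K : ℝ)) * A + (K : ℝ) * (A / (K : ℝ)) ^ 2 := by
    have hterm : ∀ k, (γ k ω + u k ω - A / (K : ℝ)) ^ 2 =
        (γ k ω + u k ω) ^ 2 - 2 * (A / (K : ℝ)) * (γ k ω + u k ω) + (A / (K : ℝ)) ^ 2 :=
      fun k => by ring
    rw [Finset.sum_congr rfl fun k _ => hterm k, Finset.sum_add_distrib,
      Finset.sum_sub_distrib, ← Finset.mul_sum, Finset.sum_const, Finset.card_range,
      nsmul_eq_mul, ← hA, ← hQ]
  rw [e1, e2]
  have hN : P / (K : ℝ) - A / (K : ℝ) * (Y / (K : ℝ)) - (∑ k ∈ Finset.range K, σuv k) / (K : ℝ)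
      = ((P - A / (K : ℝ) * Y) - ∑ k ∈ Finset.range K, σuv k) / (K : ℝ) := by
    field_simp
  have hD : Q / (K : ℝ) - A / (K : ℝ) * (A / (K : ℝ)) - (∑ k ∈ Finset.range K, σu k) / (K : ℝ)
      = ((Q - 2 * (A / (K : ℝ)) * A + (K : ℝ) * (A / (K : ℝ)) ^ 2)
          - ∑ k ∈ Finset.range K, σu k) / (K : ℝ) := by
    field_simp
    ring
  rw [hN, hD, div_div_aux hKne]
end

section
/- Let (γ_k)_{k≥1} be an i.i.d. sequence of square-integrable real random variables with variance σ²_γ, and let (u_k)_{k≥1} be independent random variables, independent of (γ_k)_{k≥1}, with u_k ~ N(0, σ²_{uk}), σ²_{uk} > 0, and sup_k σ²_{uk} < ∞. Define γ̂_k = γ_k + u_k and γ̄̂_K = K^{-1} Σ_{k=1}^K γ̂_k. Then K^{-1} Σ_{k=1}^K (γ̂_k − γ̄̂_K)·γ_k converges in probability to σ²_γ as K → ∞. -/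
open MeasureTheory ProbabilityTheory Filter Topology
open scoped NNReal

open scoped ENNReal

section GaussianMoments

open Real

variable {v : ℝ≥0}

lemma aux_integral_gaussianReal0 (hv : v ≠ 0) (g : ℝ → ℝ) :
    ∫ x, g x ∂(gaussianReal 0 v) = ∫ x, gaussianPDFReal 0 v x * g x := by
  rw [gaussianReal_of_var_ne_zero _ hv]
  have h1 : gaussianPDF 0 v = fun x => ((gaussianPDFReal 0 v x).toNNReal : ℝ≥0∞) := rfl
  rw [h1, integral_withDensity_eq_integral_smul
    (measurable_gaussianPDFReal 0 v).real_toNNReal g]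
  congr 1 with x
  rw [NNReal.smul_def, Real.coe_toNNReal _ (gaussianPDFReal_nonneg 0 v x), smul_eq_mul]

lemma aux_integrable_gaussianReal0_iff (hv : v ≠ 0) (g : ℝ → ℝ) :
    Integrable g (gaussianReal 0 v) ↔ Integrable (fun x => gaussianPDFReal 0 v x * g x) := by
  rw [gaussianReal_of_var_ne_zero _ hv]
  have h1 : gaussianPDF 0 v = fun x => ((gaussianPDFReal 0 v x).toNNReal : ℝ≥0∞) := rfl
  rw [h1, integrable_withDensity_iff_integrable_smul
    (measurable_gaussianPDFReal 0 v).real_toNNReal]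
  apply integrable_congr
  filter_upwards with x
  rw [NNReal.smul_def, Real.coe_toNNReal _ (gaussianPDFReal_nonneg 0 v x), smul_eq_mul]

lemma aux_gaussianPDFReal0_eq (hv : v ≠ 0) (x : ℝ) :
    gaussianPDFReal 0 v x = (Real.sqrt (2 * π * v))⁻¹ * Real.exp (-((2 * (v:ℝ))⁻¹) * x ^ 2) := by
  have hv' : (0:ℝ) < v := by positivity
  rw [gaussianPDFReal]
  congr 1
  rw [sub_zero]
  ring_nf

lemma aux_integral_sq_exp_neg_mul_sq {b : ℝ} (hb : 0 < b) :
    ∫ x : ℝ, x ^ 2 * Real.exp (-b * x ^ 2) = b ^ (-(3:ℝ)/2) * ((1/2) * Real.sqrt π) := by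
  have habs : ∀ x : ℝ, |x| ^ 2 * Real.exp (-b * |x| ^ 2) = x ^ 2 * Real.exp (-b * x ^ 2) := by
    intro x; rw [sq_abs]
  have h := integral_comp_abs (f := fun t : ℝ => t ^ 2 * Real.exp (-b * t ^ 2))
  simp only [habs] at h
  rw [h]
  have h2 : ∀ x ∈ Set.Ioi (0:ℝ),
      x ^ 2 * Real.exp (-b * x ^ 2) = x ^ (2:ℝ) * Real.exp (-b * x ^ (2:ℝ)) := by
    intro x _
    have : x ^ (2:ℝ) = x ^ (2:ℕ) := by
      rw [← Real.rpow_natCast x 2]; norm_num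
    rw [this]
  rw [setIntegral_congr_fun measurableSet_Ioi h2,
    integral_rpow_mul_exp_neg_mul_rpow (by norm_num) (by norm_num) hb]
  have h3 : Real.Gamma ((2 + 1) / 2) = (1/2) * Real.sqrt π := by
    have : ((2:ℝ) + 1) / 2 = 1/2 + 1 := by norm_num
    rw [this, Real.Gamma_add_one (by norm_num), Real.Gamma_one_half_eq]
  rw [h3]
  ring_nf

lemma aux_gaussian_moment_one (hv : v ≠ 0) : ∫ x, x ∂(gaussianReal 0 v) = 0 := by
  rw [aux_integral_gaussianReal0 hv]
  set f : ℝ → ℝ := fun x => gaussianPDFReal 0 v x * x with hf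
  have hodd : ∀ x, f (-x) = - f x := by
    intro x
    simp only [hf]
    rw [aux_gaussianPDFReal0_eq hv, aux_gaussianPDFReal0_eq hv]
    ring_nf
  have h1 : ∫ x, f x = ∫ x, f (-x) := (integral_neg_eq_self f volume).symm
  have h2 : ∫ x, f (-x) = - ∫ x, f x := by
    simp only [hodd]; exact integral_neg f
  linarith [h1, h2]

lemma aux_gaussian_integrable_sq (hv : v ≠ 0) :
    Integrable (fun x : ℝ => x ^ 2) (gaussianReal 0 v) := by
  rw [aux_integrable_gaussianReal0_iff hv]
  have hb : (0:ℝ) < (2 * (v:ℝ))⁻¹ := by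
    have : (0:ℝ) < v := by positivity
    positivity
  have := (integrable_rpow_mul_exp_neg_mul_sq hb (s := 2) (by norm_num)).const_mul
    ((Real.sqrt (2 * π * v))⁻¹)
  apply this.congr
  filter_upwards with x
  rw [aux_gaussianPDFReal0_eq hv]
  have : x ^ (2:ℝ) = x ^ (2:ℕ) := by rw [← Real.rpow_natCast x 2]; norm_num
  rw [this]; ring

lemma aux_gaussian_moment_two (hv : v ≠ 0) : ∫ x, x ^ 2 ∂(gaussianReal 0 v) = v := by
  have hvpos : (0:ℝ) < v := by positivity
  have hb : (0:ℝ) < (2 * (v:ℝ))⁻¹ := by positivity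
  rw [aux_integral_gaussianReal0 hv]
  have heq : (fun x : ℝ => gaussianPDFReal 0 v x * x ^ 2)
      = fun x : ℝ => (Real.sqrt (2 * π * v))⁻¹ * (x ^ 2 * Real.exp (-((2 * (v:ℝ))⁻¹) * x ^ 2)) := by
    funext x; rw [aux_gaussianPDFReal0_eq hv]; ring
  rw [heq, integral_const_mul, aux_integral_sq_exp_neg_mul_sq hb]
  have h1 : ((2 * (v:ℝ))⁻¹) ^ (-(3:ℝ)/2) = (2 * (v:ℝ)) ^ ((3:ℝ)/2) := by
    rw [Real.inv_rpow (by positivity), ← Real.rpow_neg (by positivity)]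
    norm_num
  have h32 : (2*(v:ℝ)) ^ ((3:ℝ)/2) = (2*(v:ℝ)) * Real.sqrt (2*(v:ℝ)) := by
    rw [show (3:ℝ)/2 = 1 + 1/2 by norm_num, Real.rpow_add (by positivity), Real.rpow_one,
      Real.sqrt_eq_rpow]
  have hsplit : Real.sqrt (2*π*(v:ℝ)) = Real.sqrt π * Real.sqrt (2*(v:ℝ)) := by
    rw [show 2*π*(v:ℝ) = π * (2*(v:ℝ)) by ring, Real.sqrt_mul pi_pos.le]
  have s2v : (0:ℝ) < Real.sqrt (2*(v:ℝ)) := Real.sqrt_pos.mpr (by positivity)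
  have spi : (0:ℝ) < Real.sqrt π := Real.sqrt_pos.mpr pi_pos
  rw [h1, h32, hsplit]
  field_simp

end GaussianMoments

section RV

variable {Ω : Type*} [MeasureSpace Ω] [IsProbabilityMeasure (ℙ : Measure Ω)]

lemma aux_gaussian_rv_memℒp_two {X : Ω → ℝ} (hm : Measurable X) {v : ℝ≥0} (hv : v ≠ 0)
    (h : Measure.map X ℙ = gaussianReal 0 v) : MemLp X 2 ℙ := by
  rw [memLp_two_iff_integrable_sq hm.aestronglyMeasurable]
  exact (integrable_map_measure (μ := (ℙ : Measure Ω)) (f := X)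
    (g := fun x : ℝ => x ^ 2) ((measurable_id.pow_const 2).aestronglyMeasurable)
    hm.aemeasurable).mp (by rw [h]; exact aux_gaussian_integrable_sq hv)

lemma aux_gaussian_rv_integral {X : Ω → ℝ} (hm : Measurable X) {v : ℝ≥0} (hv : v ≠ 0)
    (h : Measure.map X ℙ = gaussianReal 0 v) : ∫ ω, X ω ∂ℙ = 0 := by
  have := integral_map (μ := (ℙ : Measure Ω)) hm.aemeasurable
    (f := fun x : ℝ => x) aestronglyMeasurable_id
  rw [h] at this
  rw [← this, aux_gaussian_moment_one hv]

lemma aux_gaussian_rv_integral_sq {X : Ω → ℝ} (hm : Measurable X) {v : ℝ≥0} (hv : v ≠ 0)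
    (h : Measure.map X ℙ = gaussianReal 0 v) : ∫ ω, X ω ^ 2 ∂ℙ = v := by
  have := integral_map (μ := (ℙ : Measure Ω)) hm.aemeasurable
    (f := fun x : ℝ => x ^ 2) ((measurable_id.pow_const 2).aestronglyMeasurable)
  rw [h] at this
  rw [← this, aux_gaussian_moment_two hv]

lemma aux_tendstoInMeasure_of_var_bound {S : ℕ → Ω → ℝ} (C : ℝ)
    (hmem : ∀ K, MemLp (S K) 2 ℙ)
    (hmean : ∀ K, ∫ ω, S K ω ∂ℙ = 0)
    (hvar : ∀ K, variance (S K) ℙ ≤ C * K) :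
    TendstoInMeasure ℙ (fun K ω => S K ω / K) atTop (fun _ => (0:ℝ)) := by
  rw [tendstoInMeasure_iff_dist]
  intro ε hε
  have key : ∀ K : ℕ, (ℙ : Measure Ω) {x | ε ≤ dist (S K x / K) 0}
      ≤ ENNReal.ofReal ((C / ε ^ 2) / K) := by
    intro K
    set Y : Ω → ℝ := ((K:ℝ)⁻¹) • (S K) with hY
    have hYeq : ∀ ω, S K ω / K = Y ω := by
      intro ω; simp [hY, div_eq_inv_mul]
    have hYmem : MemLp Y 2 ℙ := (hmem K).const_smul _
    have hYmean : (ℙ : Measure Ω)[Y] = 0 := by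
      have : ∫ ω, Y ω ∂ℙ = (K:ℝ)⁻¹ * ∫ ω, S K ω ∂ℙ := by
        simp only [hY, Pi.smul_apply, smul_eq_mul]
        exact integral_const_mul _ _
      rw [this, hmean K, mul_zero]
    have hset : {x | ε ≤ dist (S K x / K) 0} = {ω | ε ≤ |Y ω - (ℙ : Measure Ω)[Y]|} := by
      ext ω
      rw [Set.mem_setOf_eq, Set.mem_setOf_eq, Real.dist_eq, sub_zero, hYeq ω, hYmean, sub_zero]
    rw [hset]
    refine (meas_ge_le_variance_div_sq hYmem hε).trans ?_
    apply ENNReal.ofReal_le_ofReal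
    have hvarY : variance Y ℙ ≤ C / K := by
      rw [hY, variance_smul]
      rcases Nat.eq_zero_or_pos K with h0 | hKpos
      · simp [h0]
      have hK : (0:ℝ) < K := by exact_mod_cast hKpos
      calc ((K:ℝ)⁻¹) ^ 2 * variance (S K) ℙ ≤ ((K:ℝ)⁻¹) ^ 2 * (C * K) := by
            apply mul_le_mul_of_nonneg_left (hvar K) (by positivity)
        _ = C / K := by field_simp
    calc variance Y ℙ / ε ^ 2 ≤ (C / K) / ε ^ 2 := by
          apply div_le_div_of_nonneg_right hvarY (by positivity)
      _ = (C / ε ^ 2) / K := by ring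
  have hlim : Tendsto (fun K : ℕ => ENNReal.ofReal ((C / ε ^ 2) / K)) atTop (𝓝 0) := by
    rw [show (0:ℝ≥0∞) = ENNReal.ofReal 0 by simp]
    exact ENNReal.tendsto_ofReal (tendsto_const_div_atTop_nhds_zero_nat _)
  exact tendsto_of_tendsto_of_tendsto_of_le_of_le tendsto_const_nhds hlim
    (fun K => zero_le) key

end RV


/-- Convergence in probability of the empirical covariance between the noisy regressor and
the true regressor: `(γ_k)` i.i.d. square-integrable with variance `σ²_γ`, `(u_k)`
independent Gaussians `N(0, σ²_{uk})` with `sup_k σ²_{uk} < ∞`, independent of `(γ_k)`;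
`γ̂_k = γ_k + u_k`. Then `K⁻¹ Σ (γ̂_k − γ̄̂_K)·γ_k` converges in probability to `σ²_γ`. -/
theorem empirical_cross_covariance_tendsto
    {Ω : Type*} [MeasureSpace Ω] [IsProbabilityMeasure (ℙ : Measure Ω)]
    (γ u : ℕ → Ω → ℝ) (σu : ℕ → ℝ≥0)
    (hmγ : ∀ k, Measurable (γ k)) (hmu : ∀ k, Measurable (u k))
    (hindepγ : iIndepFun γ ℙ)
    (hident : ∀ k, IdentDistrib (γ k) (γ 0) ℙ ℙ)
    (hγ2 : MemLp (γ 0) 2 ℙ)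
    (hindepu : iIndepFun u ℙ)
    (huγ : IndepFun (fun ω (k : ℕ) => u k ω) (fun ω (k : ℕ) => γ k ω) ℙ)
    (hu : ∀ k, Measure.map (u k) ℙ = gaussianReal 0 (σu k))
    (hσu : ∀ k, 0 < σu k)
    (hbdd : BddAbove (Set.range fun k => (σu k : ℝ))) :
    TendstoInMeasure ℙ
      (fun K ω => (∑ k ∈ Finset.range K,
        ((γ k ω + u k ω) - (∑ j ∈ Finset.range K, (γ j ω + u j ω)) / K) * γ k ω) / K)
      atTop (fun _ => variance (γ 0) ℙ) := by
  classical
  obtain ⟨C, hC⟩ : ∃ C : ℝ, ∀ k, (σu k : ℝ) ≤ C :=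
    ⟨_, fun k => le_csSup hbdd ⟨k, rfl⟩⟩
  set μ0 := ∫ ω, γ 0 ω ∂ℙ with hμ0def
  set m2 := ∫ ω, γ 0 ω ^ 2 ∂ℙ with hm2def
  have hm2nonneg : 0 ≤ m2 := integral_nonneg fun ω => sq_nonneg _
  have msq : Measurable fun x : ℝ => x ^ 2 := measurable_id.pow_const 2
  -- γ facts
  have hγsqint : Integrable (fun ω => γ 0 ω ^ 2) ℙ :=
    (memLp_two_iff_integrable_sq hγ2.1).mp hγ2
  have hγkmem : ∀ k, MemLp (γ k) 2 ℙ := fun k => (hident k).symm.memLp_snd hγ2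
  have hγkint : ∀ k, Integrable (γ k) ℙ := fun k => (hγkmem k).integrable one_le_two
  have hidsq : ∀ k, IdentDistrib (fun ω => γ k ω ^ 2) (fun ω => γ 0 ω ^ 2) ℙ ℙ :=
    fun k => (hident k).comp msq
  have hγksqint : ∀ k, Integrable (fun ω => γ k ω ^ 2) ℙ :=
    fun k => (hidsq k).integrable_iff.mpr hγsqint
  have hγksq_eq : ∀ k, ∫ ω, γ k ω ^ 2 ∂ℙ = m2 := fun k => (hidsq k).integral_eq
  -- u facts
  have humem : ∀ k, MemLp (u k) 2 ℙ :=
    fun k => aux_gaussian_rv_memℒp_two (hmu k) (hσu k).ne' (hu k)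
  have huint : ∀ k, Integrable (u k) ℙ := fun k => (humem k).integrable one_le_two
  have huE : ∀ k, ∫ ω, u k ω ∂ℙ = 0 :=
    fun k => aux_gaussian_rv_integral (hmu k) (hσu k).ne' (hu k)
  have huE2 : ∀ k, ∫ ω, u k ω ^ 2 ∂ℙ = σu k :=
    fun k => aux_gaussian_rv_integral_sq (hmu k) (hσu k).ne' (hu k)
  have husqint : ∀ k, Integrable (fun ω => u k ω ^ 2) ℙ :=
    fun k => (memLp_two_iff_integrable_sq (humem k).1).mp (humem k)
  have huVar : ∀ k, variance (u k) ℙ = σu k := by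
    intro k
    rw [variance_eq_sub (humem k)]
    have h1 : (ℙ : Measure Ω)[(u k) ^ 2] = (σu k : ℝ) := by
      rw [← huE2 k]; rfl
    have h2 : (ℙ : Measure Ω)[u k] = 0 := huE k
    rw [h1, h2]; ring
  -- (1) SLLN for squares
  have hA : ∀ᵐ ω ∂ℙ, Tendsto (fun K : ℕ => (∑ k ∈ Finset.range K, γ k ω ^ 2) / K)
      atTop (𝓝 m2) := by
    have h := strong_law_ae (X := fun k ω => γ k ω ^ 2) (μ := ℙ) hγsqint
      (fun i j hij => (hindepγ.indepFun hij).comp msq msq)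
      (fun i => (hident i).comp msq)
    filter_upwards [h] with ω hω
    simpa [div_eq_inv_mul] using hω
  -- (2) SLLN
  have hAbar : ∀ᵐ ω ∂ℙ, Tendsto (fun K : ℕ => (∑ k ∈ Finset.range K, γ k ω) / K)
      atTop (𝓝 μ0) := by
    have h := strong_law_ae (X := γ) (μ := ℙ) (hγkint 0)
      (fun i j hij => hindepγ.indepFun hij) hident
    filter_upwards [h] with ω hω
    simpa [div_eq_inv_mul] using hω
  -- (3) Ubar tendsto in measure
  have hUbar : TendstoInMeasure ℙ (fun K ω => (∑ k ∈ Finset.range K, u k ω) / K)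
      atTop (fun _ => (0:ℝ)) := by
    apply aux_tendstoInMeasure_of_var_bound C
    · exact fun K => memLp_finset_sum (Finset.range K) (fun k _ => humem k)
    · intro K
      rw [integral_finset_sum _ (fun k _ => huint k)]
      simp [huE]
    · intro K
      have h1 : variance (fun ω => ∑ k ∈ Finset.range K, u k ω) ℙ
          = variance (∑ k ∈ Finset.range K, u k) ℙ := by
        congr 1; funext ω; simp [Finset.sum_apply]
      rw [h1, IndepFun.variance_sum (fun k _ => humem k)
        (fun i _ j _ hij => hindepu.indepFun hij)]
      have : ∑ k ∈ Finset.range K, variance (u k) ℙ = ∑ k ∈ Finset.range K, (σu k : ℝ) := by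
        exact Finset.sum_congr rfl fun k _ => huVar k
      rw [this]
      calc ∑ k ∈ Finset.range K, (σu k : ℝ) ≤ (Finset.range K).card • C :=
            Finset.sum_le_card_nsmul _ _ C (fun k _ => hC k)
        _ = C * K := by simp [nsmul_eq_mul, Finset.card_range, mul_comm]
  -- (5) B tendsto in measure
  have hevalm : ∀ k : ℕ, Measurable fun x : ℕ → ℝ => x k := fun k => measurable_pi_apply k
  have hindepUG : ∀ j k : ℕ, IndepFun (fun ω => u j ω * u k ω) (fun ω => γ j ω * γ k ω) ℙ :=
    fun j k => huγ.comp ((hevalm j).mul (hevalm k)) ((hevalm j).mul (hevalm k))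
  have hindepuγk : ∀ j k : ℕ, IndepFun (u j) (γ k) ℙ :=
    fun j k => huγ.comp (hevalm j) (hevalm k)
  have hUU_int : ∀ j k, Integrable (fun ω => u j ω * u k ω) ℙ := by
    intro j k
    rcases eq_or_ne j k with rfl | hjk
    · have := husqint j
      apply this.congr
      filter_upwards with ω
      rw [pow_two]
    · exact (hindepu.indepFun hjk).integrable_mul (huint j) (huint k)
  have hGG_int : ∀ j k, Integrable (fun ω => γ j ω * γ k ω) ℙ := by
    intro j k
    rcases eq_or_ne j k with rfl | hjk
    · have := hγksqint j
      apply this.congr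
      filter_upwards with ω
      rw [pow_two]
    · exact (hindepγ.indepFun hjk).integrable_mul (hγkint j) (hγkint k)
  have hUU_eq0 : ∀ j k, j ≠ k → ∫ ω, u j ω * u k ω ∂ℙ = 0 := by
    intro j k hjk
    have h := (hindepu.indepFun hjk).integral_mul_eq_mul_integral
      (hmu j).aestronglyMeasurable (hmu k).aestronglyMeasurable
    calc ∫ ω, u j ω * u k ω ∂ℙ = ∫ ω, (u j * u k) ω ∂ℙ := rfl
      _ = (∫ ω, u j ω ∂ℙ) * ∫ ω, u k ω ∂ℙ := h
      _ = 0 := by rw [huE j, zero_mul]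
  have hZZ_int : ∀ j k, Integrable (fun ω => (u j ω * γ j ω) * (u k ω * γ k ω)) ℙ := by
    intro j k
    have h := (hindepUG j k).integrable_mul (hUU_int j k) (hGG_int j k)
    apply h.congr
    filter_upwards with ω
    show (u j ω * u k ω) * (γ j ω * γ k ω) = _
    ring
  have hZZ_eq : ∀ j k, ∫ ω, (u j ω * γ j ω) * (u k ω * γ k ω) ∂ℙ
      = if j = k then (σu j : ℝ) * m2 else 0 := by
    intro j k
    have hre : ∫ ω, (u j ω * γ j ω) * (u k ω * γ k ω) ∂ℙ
        = ∫ ω, (u j ω * u k ω) * (γ j ω * γ k ω) ∂ℙ := by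
      apply integral_congr_ae
      filter_upwards with ω
      ring
    have h := (hindepUG j k).integral_mul_eq_mul_integral
      (((hmu j).mul (hmu k)).aestronglyMeasurable) (((hmγ j).mul (hmγ k)).aestronglyMeasurable)
    rw [hre]
    rcases eq_or_ne j k with rfl | hjk
    · simp only [if_pos rfl]
      calc ∫ ω, (u j ω * u j ω) * (γ j ω * γ j ω) ∂ℙ
          = (∫ ω, u j ω * u j ω ∂ℙ) * ∫ ω, γ j ω * γ j ω ∂ℙ := h
        _ = (σu j : ℝ) * m2 := by
            have e1 : ∫ ω, u j ω * u j ω ∂ℙ = (σu j : ℝ) := by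
              rw [← huE2 j]
              apply integral_congr_ae
              filter_upwards with ω
              rw [pow_two]
            have e2 : ∫ ω, γ j ω * γ j ω ∂ℙ = m2 := by
              rw [← hγksq_eq j]
              apply integral_congr_ae
              filter_upwards with ω
              rw [pow_two]
            rw [e1, e2]
    · simp only [if_neg hjk]
      calc ∫ ω, (u j ω * u k ω) * (γ j ω * γ k ω) ∂ℙ
          = (∫ ω, u j ω * u k ω ∂ℙ) * ∫ ω, γ j ω * γ k ω ∂ℙ := h
        _ = 0 := by rw [hUU_eq0 j k hjk, zero_mul]
  have hZmem : ∀ k, MemLp (fun ω => u k ω * γ k ω) 2 ℙ := by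
    intro k
    rw [memLp_two_iff_integrable_sq (f := fun ω => u k ω * γ k ω) ((hmu k).mul (hmγ k)).aestronglyMeasurable]
    have hind : IndepFun (fun ω => u k ω ^ 2) (fun ω => γ k ω ^ 2) ℙ :=
      huγ.comp ((hevalm k).pow_const 2) ((hevalm k).pow_const 2)
    have h := hind.integrable_mul (husqint k) (hγksqint k)
    apply h.congr
    filter_upwards with ω
    show u k ω ^ 2 * γ k ω ^ 2 = _
    ring
  have hZE : ∀ k, ∫ ω, u k ω * γ k ω ∂ℙ = 0 := by
    intro k
    have h := (hindepuγk k k).integral_mul_eq_mul_integral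
      (hmu k).aestronglyMeasurable (hmγ k).aestronglyMeasurable
    calc ∫ ω, u k ω * γ k ω ∂ℙ = ∫ ω, (u k * γ k) ω ∂ℙ := rfl
      _ = (∫ ω, u k ω ∂ℙ) * ∫ ω, γ k ω ∂ℙ := h
      _ = 0 := by rw [huE k, zero_mul]
  have hB : TendstoInMeasure ℙ (fun K ω => (∑ k ∈ Finset.range K, u k ω * γ k ω) / K)
      atTop (fun _ => (0:ℝ)) := by
    apply aux_tendstoInMeasure_of_var_bound (C * m2)
    · exact fun K => memLp_finset_sum (Finset.range K) (fun k _ => hZmem k)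
    · intro K
      rw [integral_finset_sum _ (fun k _ => ((hZmem k).integrable one_le_two))]
      simp [hZE]
    · intro K
      set S : Ω → ℝ := fun ω => ∑ k ∈ Finset.range K, u k ω * γ k ω with hSdef
      have hSmem : MemLp S 2 ℙ := memLp_finset_sum (Finset.range K) (fun k _ => hZmem k)
      rw [variance_eq_sub hSmem]
      have hmean0 : (ℙ : Measure Ω)[S] = 0 := by
        rw [hSdef]
        rw [integral_finset_sum _ (fun k _ => ((hZmem k).integrable one_le_two))]
        simp [hZE]
      have hsq : (ℙ : Measure Ω)[S ^ 2] = ∑ j ∈ Finset.range K, (σu j : ℝ) * m2 := by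
        have e0 : (ℙ : Measure Ω)[S ^ 2]
            = ∫ ω, ∑ j ∈ Finset.range K, ∑ k ∈ Finset.range K,
                (u j ω * γ j ω) * (u k ω * γ k ω) ∂ℙ := by
          apply integral_congr_ae
          filter_upwards with ω
          show S ω ^ 2 = _
          rw [hSdef, sq, Finset.sum_mul_sum]
        rw [e0, integral_finset_sum _
          (fun j _ => integrable_finset_sum _ (fun k _ => hZZ_int j k))]
        have e1 : ∀ j ∈ Finset.range K,
            ∫ ω, ∑ k ∈ Finset.range K, (u j ω * γ j ω) * (u k ω * γ k ω) ∂ℙ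
            = (σu j : ℝ) * m2 := by
          intro j hj
          rw [integral_finset_sum _ (fun k _ => hZZ_int j k)]
          have e2 : ∀ k ∈ Finset.range K,
              ∫ ω, (u j ω * γ j ω) * (u k ω * γ k ω) ∂ℙ
              = if j = k then (σu j : ℝ) * m2 else 0 := fun k _ => hZZ_eq j k
          rw [Finset.sum_congr rfl e2, Finset.sum_ite_eq (Finset.range K) j
            (fun _ => (σu j : ℝ) * m2), if_pos hj]
        rw [Finset.sum_congr rfl e1]
      rw [hsq, hmean0]
      have hbound : ∑ j ∈ Finset.range K, (σu j : ℝ) * m2 ≤ (Finset.range K).card • (C * m2) :=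
        Finset.sum_le_card_nsmul _ _ (C * m2)
          (fun j _ => mul_le_mul_of_nonneg_right (hC j) hm2nonneg)
      calc (∑ j ∈ Finset.range K, (σu j : ℝ) * m2) - 0 ^ 2
          ≤ (Finset.range K).card • (C * m2) := by simpa using hbound
        _ = (C * m2) * K := by simp [nsmul_eq_mul, Finset.card_range, mul_comm]
  -- the algebraic identity
  have hid : ∀ (K : ℕ) (ω : Ω),
      (∑ k ∈ Finset.range K,
        ((γ k ω + u k ω) - (∑ j ∈ Finset.range K, (γ j ω + u j ω)) / K) * γ k ω) / K
      = (∑ k ∈ Finset.range K, γ k ω ^ 2) / K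
        + (∑ k ∈ Finset.range K, u k ω * γ k ω) / K
        - ((∑ k ∈ Finset.range K, γ k ω) / K) * ((∑ k ∈ Finset.range K, γ k ω) / K)
        - ((∑ k ∈ Finset.range K, u k ω) / K) * ((∑ k ∈ Finset.range K, γ k ω) / K) := by
    intro K ω
    rcases Nat.eq_zero_or_pos K with h0 | hK
    · simp [h0]
    have hKne : (K:ℝ) ≠ 0 := Nat.cast_ne_zero.mpr hK.ne'
    have hT : ∑ j ∈ Finset.range K, (γ j ω + u j ω)
        = (∑ j ∈ Finset.range K, γ j ω) + ∑ j ∈ Finset.range K, u j ω :=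
      Finset.sum_add_distrib
    have e1 : ∀ k ∈ Finset.range K,
        ((γ k ω + u k ω) - (∑ j ∈ Finset.range K, (γ j ω + u j ω)) / K) * γ k ω
        = (γ k ω ^ 2 + u k ω * γ k ω)
          - ((∑ j ∈ Finset.range K, (γ j ω + u j ω)) / K) * γ k ω := by
      intro k _; ring
    rw [Finset.sum_congr rfl e1, Finset.sum_sub_distrib, Finset.sum_add_distrib,
      ← Finset.mul_sum, hT]
    field_simp
    ring
  -- measurability of the main sequence
  have hSmeas : ∀ K, AEStronglyMeasurable
      (fun ω => (∑ k ∈ Finset.range K,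
        ((γ k ω + u k ω) - (∑ j ∈ Finset.range K, (γ j ω + u j ω)) / K) * γ k ω) / K) ℙ := by
    intro K
    apply Measurable.aestronglyMeasurable
    apply Measurable.div_const
    apply Finset.measurable_sum
    intro k _
    apply Measurable.mul _ (hmγ k)
    apply Measurable.sub ((hmγ k).add (hmu k))
    apply Measurable.div_const
    exact Finset.measurable_sum _ (fun j _ => (hmγ j).add (hmu j))
  -- variance identity
  have hvc : variance (γ 0) ℙ = m2 - μ0 ^ 2 := by
    rw [variance_eq_sub hγ2]
    rfl
  -- final wiring via subsequences
  intro ε hε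
  apply tendsto_of_subseq_tendsto
  intro ns hns
  have h1 : TendstoInMeasure ℙ
      (fun n ω => (∑ k ∈ Finset.range (ns n), u k ω) / (ns n)) atTop (fun _ => (0:ℝ)) :=
    fun δ hδ => (hUbar δ hδ).comp hns
  obtain ⟨ms1, hms1mono, hms1⟩ := h1.exists_seq_tendsto_ae
  have h2 : TendstoInMeasure ℙ
      (fun n ω => (∑ k ∈ Finset.range (ns (ms1 n)), u k ω * γ k ω) / (ns (ms1 n)))
      atTop (fun _ => (0:ℝ)) :=
    fun δ hδ => (hB δ hδ).comp (hns.comp hms1mono.tendsto_atTop)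
  obtain ⟨ms2, hms2mono, hms2⟩ := h2.exists_seq_tendsto_ae
  set φ : ℕ → ℕ := fun n => ns (ms1 (ms2 n)) with hφdef
  have hφ : Tendsto φ atTop atTop :=
    hns.comp (hms1mono.tendsto_atTop.comp hms2mono.tendsto_atTop)
  have hae : ∀ᵐ ω ∂ℙ, Tendsto
      (fun n => (∑ k ∈ Finset.range (φ n),
        ((γ k ω + u k ω) - (∑ j ∈ Finset.range (φ n), (γ j ω + u j ω)) / (φ n)) * γ k ω) / (φ n))
      atTop (𝓝 (variance (γ 0) ℙ)) := by
    filter_upwards [hA, hAbar, hms1, hms2] with ω hAω hAbarω hUω hBω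
    have hAφ : Tendsto (fun n => (∑ k ∈ Finset.range (φ n), γ k ω ^ 2) / (φ n))
        atTop (𝓝 m2) := hAω.comp hφ
    have hAbarφ : Tendsto (fun n => (∑ k ∈ Finset.range (φ n), γ k ω) / (φ n))
        atTop (𝓝 μ0) := hAbarω.comp hφ
    have hUφ : Tendsto (fun n => (∑ k ∈ Finset.range (φ n), u k ω) / (φ n))
        atTop (𝓝 0) := hUω.comp hms2mono.tendsto_atTop
    have hBφ : Tendsto (fun n => (∑ k ∈ Finset.range (φ n), u k ω * γ k ω) / (φ n))
        atTop (𝓝 0) := hBω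
    have hcomb := ((hAφ.add hBφ).sub (hAbarφ.mul hAbarφ)).sub (hUφ.mul hAbarφ)
    have hlim : m2 + 0 - μ0 * μ0 - 0 * μ0 = variance (γ 0) ℙ := by
      rw [hvc]; ring
    rw [hlim] at hcomb
    apply hcomb.congr
    intro n
    exact (hid (φ n) ω).symm
  have hfinal := tendstoInMeasure_of_tendsto_ae (fun n => hSmeas (φ n)) hae
  exact ⟨fun n => ms1 (ms2 n), hfinal ε hε⟩
end
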